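/- arXiv:1401.6848 — 7 statements merged into one kernel-verified Lean document; each statement's English description precedes it below -/
import Mathlib

section
/- Let φ be a 3SAT instance with n variables and m clauses, each clause containing exactly 3 distinct variables. If SAT(φ) ≤ 1 − ε for some ε ∈ [0,1], then the value of the clause/variable game satisfies ω(G_φ) ≤ 1 − ε/3. -/
open Finset

/-- A 3SAT clause over `n` variables: three distinct variable indices together with
three negation signs.  The `t`-th literal is satisfied by an assignment `x` iff
`x (var t) ≠ neg t`. -/
structure Clause3 (n : ℕ) where
  var : Fin 3 → Fin n
  neg : Fin 3 → Bool
  inj : Function.Injective var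

/-- The clause is satisfied by the (global) assignment `x`. -/
def Clause3.satBy {n : ℕ} (C : Clause3 n) (x : Fin n → Bool) : Prop :=
  ∃ t : Fin 3, x (C.var t) ≠ C.neg t

/-- The clause is satisfied by a local assignment `α` to its three variables
(indexed by position). -/
def Clause3.satLocal {n : ℕ} (C : Clause3 n) (α : Fin 3 → Bool) : Prop :=
  ∃ t : Fin 3, α t ≠ C.neg t

instance {n : ℕ} (C : Clause3 n) (x : Fin n → Bool) : Decidable (C.satBy x) := by
  unfold Clause3.satBy; infer_instance

instance {n : ℕ} (C : Clause3 n) (α : Fin 3 → Bool) : Decidable (C.satLocal α) := by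
  unfold Clause3.satLocal; infer_instance

/-- `SAT(φ)`: the maximum, over assignments, of the fraction of satisfied clauses. -/
noncomputable def satVal {n m : ℕ} (φ : Fin m → Clause3 n) : ℝ :=
  ⨆ x : Fin n → Bool, ((univ.filter fun i => (φ i).satBy x).card : ℝ) / m

/-- The value of the clause/variable game `G_φ`: Arthur picks a uniformly random
clause index `i` and a uniformly random position `t : Fin 3` (equivalently, a
uniformly random variable of `C_i`, since the three variables are distinct);
Merlin₁ answers with an assignment to the three variables of each clause, Merlin₂
with a bit for each variable; they win iff Merlin₁'s assignment satisfies `C_i`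
and agrees with Merlin₂'s bit on the chosen variable. -/
noncomputable def cvVal {n m : ℕ} (φ : Fin m → Clause3 n) : ℝ :=
  ⨆ a : Fin m → Fin 3 → Bool, ⨆ b : Fin n → Bool,
    (∑ i : Fin m, ∑ t : Fin 3,
        if (φ i).satLocal (a i) ∧ a i t = b ((φ i).var t) then (1 : ℝ) else 0) /
      (3 * (m : ℝ))

/-- If `SAT(φ) ≤ 1 - ε` with `ε ∈ [0,1]`, then `ω(G_φ) ≤ 1 - ε/3`. -/
theorem clause_variable_game_soundness {n m : ℕ} (hm : 0 < m)
    (φ : Fin m → Clause3 n) (ε : ℝ) (hε : ε ∈ Set.Icc (0 : ℝ) 1)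
    (hsat : satVal φ ≤ 1 - ε) :
    cvVal φ ≤ 1 - ε / 3 := by
  have hm' : (0:ℝ) < m := by exact_mod_cast hm
  apply ciSup_le
  intro a
  apply ciSup_le
  intro b
  -- key per-clause bound
  have key : ∀ i : Fin m,
      (∑ t : Fin 3, if (φ i).satLocal (a i) ∧ a i t = b ((φ i).var t) then (1 : ℝ) else 0)
        ≤ if (φ i).satBy b then 3 else 2 := by
    intro i
    by_cases hs : (φ i).satBy b
    · simp only [hs, if_true]
      calc (∑ t : Fin 3, if (φ i).satLocal (a i) ∧ a i t = b ((φ i).var t) then (1:ℝ) else 0)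
          ≤ ∑ t : Fin 3, (1:ℝ) := by
            apply Finset.sum_le_sum; intro t _; split <;> norm_num
        _ = 3 := by simp
    · simp only [hs, if_false]
      by_cases hall : ∀ t : Fin 3, ((φ i).satLocal (a i) ∧ a i t = b ((φ i).var t))
      · exfalso
        apply hs
        obtain ⟨t, ht⟩ := (hall 0).1
        exact ⟨t, by rw [← (hall t).2]; exact ht⟩
      · push_neg at hall
        obtain ⟨t₀, ht₀⟩ := hall
        have : (∑ t : Fin 3, if (φ i).satLocal (a i) ∧ a i t = b ((φ i).var t) then (1:ℝ) else 0)
            = ∑ t ∈ univ.erase t₀, (if (φ i).satLocal (a i) ∧ a i t = b ((φ i).var t) then (1:ℝ) else 0)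
              + (if (φ i).satLocal (a i) ∧ a i t₀ = b ((φ i).var t₀) then (1:ℝ) else 0) := by
          rw [Finset.sum_erase_add]; exact Finset.mem_univ _
        rw [this, if_neg (fun h => ht₀ h.1 h.2), add_zero]
        calc (∑ t ∈ univ.erase t₀, if (φ i).satLocal (a i) ∧ a i t = b ((φ i).var t) then (1:ℝ) else 0)
            ≤ ∑ t ∈ univ.erase t₀, (1:ℝ) := by
              apply Finset.sum_le_sum; intro t _; split <;> norm_num
          _ = 2 := by
              rw [Finset.sum_const, Finset.card_erase_of_mem (Finset.mem_univ _)]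
              simp
  -- fraction of clauses satisfied by b
  set K : ℕ := (univ.filter fun i => (φ i).satBy b).card with hK
  have hKle : (K : ℝ) / m ≤ 1 - ε := by
    refine le_trans ?_ hsat
    apply le_ciSup (f := fun x : Fin n → Bool => ((univ.filter fun i => (φ i).satBy x).card : ℝ) / m)
    exact Set.Finite.bddAbove (Set.finite_range _)
  have hKle' : (K : ℝ) ≤ (1 - ε) * m := by
    rw [div_le_iff₀ hm'] at hKle; linarith
  -- total sum bound
  have htot : (∑ i : Fin m, ∑ t : Fin 3,
      if (φ i).satLocal (a i) ∧ a i t = b ((φ i).var t) then (1 : ℝ) else 0)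
      ≤ 2 * m + K := by
    calc (∑ i : Fin m, ∑ t : Fin 3,
          if (φ i).satLocal (a i) ∧ a i t = b ((φ i).var t) then (1 : ℝ) else 0)
        ≤ ∑ i : Fin m, (if (φ i).satBy b then (3:ℝ) else 2) :=
          Finset.sum_le_sum fun i _ => key i
      _ = ∑ i : Fin m, ((if (φ i).satBy b then (1:ℝ) else 0) + 2) := by
          apply Finset.sum_congr rfl; intro i _; split <;> norm_num
      _ = (∑ i : Fin m, if (φ i).satBy b then (1:ℝ) else 0) + 2 * m := by
          rw [Finset.sum_add_distrib]; simp [mul_comm]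
      _ = (K : ℝ) + 2 * m := by
          rw [hK, Finset.sum_boole]
      _ = 2 * m + K := by ring
  rw [div_le_iff₀ (by positivity)]
  have : (1 - ε / 3) * (3 * m) = 2 * m + (1 - ε) * m := by ring
  rw [this]
  linarith
end

section
/- Consider a simple bipartite graph with M left-vertices, each of degree exactly c, and N right-vertices, each of degree exactly d (so cM = dN). Choose a uniformly random k-element subset of the left-vertices and, independently, a uniformly random ℓ-element subset of the right-vertices (where 1 ≤ k ≤ M and 1 ≤ ℓ ≤ N), and let H be the induced subgraph on these chosen vertices. Then Pr[H contains at least one edge] ≥ (ckℓ/N)·(1 − c²k²/N − ckℓ/N). -/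
/-!
Let `X` be the number of edges of `H`. Each edge survives with probability `p q`, where
`p = k / M` and `q = ℓ / N`, so `𝔼 X = c M p q = c k ℓ / N`. For every natural number `m`
we have `3 m ≤ 2 [m > 0] + m²`, hence `2 ℙ(X > 0) ≥ 3 𝔼 X - 𝔼 X²`. In `𝔼 X²` a pair of
edges survives with probability at most `p ^ #(left ends) * q ^ #(right ends)`, because a
random `r`-subset of an `n`-set contains a fixed `j`-set with probability at most `(r / n) ^ j`.
Counting pairs of edges by their shared endpoints gives `𝔼 X² ≤ 𝔼 X (1 + c q + d p + 𝔼 X)`,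
and since `d p = c k / N` this rearranges into the stated bound.
-/

open Finset

theorem Nat.choose_sub_mul_pow_le {n r j : ℕ} (hjr : j ≤ r) (hrn : r ≤ n) :
    (n - j).choose (r - j) * n ^ j ≤ n.choose r * r ^ j := by
  induction j with
  | zero => simp
  | succ j ih =>
    obtain ⟨m, hm⟩ : ∃ m, n - j = m + 1 := ⟨n - j - 1, by omega⟩
    obtain ⟨q, hq⟩ : ∃ q, r - j = q + 1 := ⟨r - j - 1, by omega⟩
    have ih := ih (by omega)
    rw [hm, hq] at ih
    rw [show n - (j + 1) = m by omega, show r - (j + 1) = q by omega]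
    have hratio : (q + 1) * n ≤ r * (m + 1) := by
      rw [← hm, ← hq]
      obtain ⟨a, rfl⟩ : ∃ a, r = j + a := ⟨r - j, by omega⟩
      obtain ⟨b, rfl⟩ : ∃ b, n = j + b := ⟨n - j, by omega⟩
      simp only [Nat.add_sub_cancel_left]
      nlinarith
    refine Nat.le_of_mul_le_mul_left ?_ m.succ_pos
    calc (m + 1) * (m.choose q * n ^ (j + 1))
        = (m + 1) * m.choose q * n * n ^ j := by ring
      _ = (m + 1).choose (q + 1) * ((q + 1) * n) * n ^ j := by
          rw [Nat.add_one_mul_choose_eq]; ring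
      _ ≤ (m + 1).choose (q + 1) * (r * (m + 1)) * n ^ j := by gcongr
      _ = (m + 1) * r * ((m + 1).choose (q + 1) * n ^ j) := by ring
      _ ≤ (m + 1) * r * (n.choose r * r ^ j) := by gcongr
      _ = (m + 1) * (n.choose r * r ^ (j + 1)) := by ring

namespace Finset

variable {α : Type*} [DecidableEq α]

theorem card_filter_powersetCard_subset_le {s t : Finset α} (hts : t ⊆ s) (r : ℕ) :
    (#{u ∈ s.powersetCard r | t ⊆ u} : ℝ) ≤ (#s).choose r * (r / #s) ^ #t := by
  rcases lt_or_ge r #t with hrt | htr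
  · have hempty : #{u ∈ s.powersetCard r | t ⊆ u} = 0 := by
      refine card_eq_zero.2 (filter_eq_empty_iff.2 fun u hu htu => ?_)
      have := card_le_card htu
      rw [(mem_powersetCard.1 hu).2] at this
      omega
    rw [hempty, Nat.cast_zero]
    positivity
  rcases lt_or_ge #s r with hsr | hrs
  · simp [powersetCard_eq_empty.2 hsr, Nat.choose_eq_zero_of_lt hsr]
  rcases (Nat.zero_le #s).eq_or_lt with hs | hs
  · obtain rfl := card_eq_zero.1 hs.symm
    obtain rfl := subset_empty.1 hts
    simp
  rw [card_filter_powersetCard_subset t s r hts htr, div_pow, mul_div_assoc',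
    le_div_iff₀ (by positivity)]
  exact_mod_cast Nat.choose_sub_mul_pow_le htr hrs

theorem card_filter_mem_powersetCard {s : Finset α} {a : α} (ha : a ∈ s) (r : ℕ) :
    (#{u ∈ s.powersetCard r | a ∈ u} : ℝ) = (#s).choose r * (r / #s) := by
  rcases r.eq_zero_or_pos with rfl | hr
  · simp
  rcases lt_or_ge #s r with hsr | hrs
  · simp [powersetCard_eq_empty.2 hsr, Nat.choose_eq_zero_of_lt hsr]
  obtain ⟨n, hn⟩ : ∃ n, #s = n + 1 := ⟨#s - 1, by have := card_pos.2 ⟨a, ha⟩; omega⟩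
  obtain ⟨q, rfl⟩ : ∃ q, r = q + 1 := ⟨r - 1, by omega⟩
  have hcount := card_filter_powersetCard_subset {a} s (q + 1) (singleton_subset_iff.2 ha)
    (by simp)
  simp only [singleton_subset_iff, card_singleton, hn, Nat.add_sub_cancel] at hcount
  rw [hcount, hn, mul_div_assoc', eq_div_iff (by positivity), mul_comm]
  exact_mod_cast Nat.add_one_mul_choose_eq n q

theorem three_mul_sum_card_le_two_mul_card_biUnion_add {ι β : Type*} [DecidableEq β]
    (s : Finset ι) (A : ι → Finset β) :
    3 * ∑ i ∈ s, #(A i) ≤ 2 * #(s.biUnion A) + ∑ i ∈ s, ∑ j ∈ s, #(A i ∩ A j) := by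
  set U := s.biUnion A
  have hsub : ∀ i ∈ s, A i ⊆ U := fun i hi => subset_biUnion_of_mem A hi
  have hfirst : ∑ i ∈ s, #(A i) = ∑ b ∈ U, #{i ∈ s | b ∈ A i} := by
    simp_rw [card_filter]
    rw [sum_comm]
    refine sum_congr rfl fun i hi => ?_
    rw [← card_filter, filter_mem_eq_inter, inter_eq_right.2 (hsub i hi)]
  have hsecond : ∑ i ∈ s, ∑ j ∈ s, #(A i ∩ A j) = ∑ b ∈ U, #{i ∈ s | b ∈ A i} ^ 2 := by
    calc ∑ i ∈ s, ∑ j ∈ s, #(A i ∩ A j)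
        = ∑ i ∈ s, ∑ j ∈ s, ∑ b ∈ U,
            (if b ∈ A i then 1 else 0) * (if b ∈ A j then (1 : ℕ) else 0) := by
          refine sum_congr rfl fun i hi => sum_congr rfl fun j _ => ?_
          simp_rw [ite_zero_mul_ite_zero, one_mul, ← mem_inter, sum_ite_mem, sum_const,
            smul_eq_mul, mul_one, inter_eq_right.2 (inter_subset_left.trans (hsub i hi))]
      _ = ∑ b ∈ U, (∑ i ∈ s, if b ∈ A i then 1 else 0) *
            ∑ j ∈ s, if b ∈ A j then (1 : ℕ) else 0 := by
          simp_rw [sum_mul_sum]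
          exact (sum_congr rfl fun i _ => sum_comm).trans sum_comm
      _ = ∑ b ∈ U, #{i ∈ s | b ∈ A i} ^ 2 := by simp_rw [sq, card_filter]
  rw [hfirst, hsecond, card_eq_sum_ones U, mul_sum, mul_sum, ← sum_add_distrib]
  refine sum_le_sum fun b _ => ?_
  -- `3 m ≤ 2 + m²` is `(m - 1) (m - 2) ≥ 0`, true at every integer `m`
  nlinarith [sq_nonneg ((#{i ∈ s | b ∈ A i} : ℤ) - 1)]

end Finset

theorem pow_card_pair_le {α R : Type*} [DecidableEq α] [CommSemiring R] [PartialOrder R]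
    [IsOrderedRing R] {p : R} (hp : 0 ≤ p) (a b : α) :
    p ^ #{a, b} ≤ p * ((if b = a then 1 else 0) + p) := by
  rcases eq_or_ne b a with rfl | hab
  · simpa [mul_add] using le_add_of_nonneg_right (mul_nonneg hp hp)
  · rw [card_pair hab.symm, if_neg hab, zero_add, sq]

def bipartiteEdges {α β : Type*} [Fintype α] [Fintype β] (G : α → β → Prop) [DecidableRel G] :
    Finset (α × β) :=
  {e | G e.1 e.2}

section BipartiteEdges

variable {α β : Type*} [Fintype α] [Fintype β] (G : α → β → Prop) [DecidableRel G]

theorem card_bipartiteEdges_filter_fst [DecidableEq α] (a : α) :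
    #{e ∈ bipartiteEdges G | e.1 = a} = #{b | G a b} := by
  rw [← card_map (Function.Embedding.sectR a β)]
  congr 1
  ext ⟨x, y⟩
  simp only [bipartiteEdges, mem_filter, mem_univ, true_and, mem_map,
    Function.Embedding.sectR_apply, Prod.mk.injEq]
  constructor
  · rintro ⟨h, rfl⟩; exact ⟨y, h, rfl, rfl⟩
  · rintro ⟨y, h, rfl, rfl⟩; exact ⟨h, rfl⟩

theorem card_bipartiteEdges_filter_snd [DecidableEq β] (b : β) :
    #{e ∈ bipartiteEdges G | e.2 = b} = #{a | G a b} := by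
  rw [← card_map (Function.Embedding.sectL α b)]
  congr 1
  ext ⟨x, y⟩
  simp only [bipartiteEdges, mem_filter, mem_univ, true_and, mem_map,
    Function.Embedding.sectL_apply, Prod.mk.injEq]
  constructor
  · rintro ⟨h, rfl⟩; exact ⟨x, h, rfl, rfl⟩
  · rintro ⟨x, h, rfl, rfl⟩; exact ⟨h, rfl⟩

theorem card_bipartiteEdges_of_forall_fst {c : ℕ} (hc : ∀ a, #{b | G a b} = c) :
    #(bipartiteEdges G) = Fintype.card α * c :=
  calc #(bipartiteEdges G) = ∑ a, #{b | G a b} := by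
        simp only [bipartiteEdges, card_filter, Fintype.sum_prod_type]
    _ = Fintype.card α * c := by simp [hc]

theorem card_bipartiteEdges_of_forall_snd {d : ℕ} (hd : ∀ b, #{a | G a b} = d) :
    #(bipartiteEdges G) = Fintype.card β * d :=
  calc #(bipartiteEdges G) = ∑ b, #{a | G a b} := by
        simp only [bipartiteEdges, card_filter, Fintype.sum_prod_type_right]
    _ = Fintype.card β * d := by simp [hd]

theorem sum_sum_pow_card_pair_le [DecidableEq α] [DecidableEq β] {c d : ℕ}
    (hc : ∀ a, #{b | G a b} ≤ c) (hd : ∀ b, #{a | G a b} ≤ d) {p q : ℝ} (hp : 0 ≤ p)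
    (hq : 0 ≤ q) :
    ∑ e ∈ bipartiteEdges G, ∑ f ∈ bipartiteEdges G, p ^ #{e.1, f.1} * q ^ #{e.2, f.2} ≤
      #(bipartiteEdges G) * (p * q * (1 + c * q + d * p + #(bipartiteEdges G) * p * q)) := by
  set Edg := bipartiteEdges G
  rw [← nsmul_eq_mul]
  refine sum_le_card_nsmul _ _ _ fun e he => ?_
  have hpair (f : α × β) : p ^ #{e.1, f.1} * q ^ #{e.2, f.2} ≤
      p * q * ((if f = e then 1 else 0) + q * (if f.1 = e.1 then 1 else 0) +
        p * (if f.2 = e.2 then 1 else 0) + p * q) := by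
    calc p ^ #{e.1, f.1} * q ^ #{e.2, f.2}
        ≤ p * ((if f.1 = e.1 then 1 else 0) + p) * (q * ((if f.2 = e.2 then 1 else 0) + q)) :=
          mul_le_mul (pow_card_pair_le hp _ _) (pow_card_pair_le hq _ _) (by positivity)
            (by positivity)
      _ = _ := by simp only [Prod.ext_iff, ite_and]; split_ifs <;> ring
  calc ∑ f ∈ Edg, p ^ #{e.1, f.1} * q ^ #{e.2, f.2}
      ≤ ∑ f ∈ Edg, p * q * ((if f = e then 1 else 0) + q * (if f.1 = e.1 then 1 else 0) +
          p * (if f.2 = e.2 then 1 else 0) + p * q) := sum_le_sum fun f _ => hpair f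
    _ = p * q * (1 + #{f ∈ Edg | f.1 = e.1} * q + #{f ∈ Edg | f.2 = e.2} * p +
          #Edg * p * q) := by
        simp only [← mul_sum, sum_add_distrib, sum_boole, filter_eq', if_pos he, card_singleton,
          sum_const, nsmul_eq_mul]
        ring
    _ ≤ p * q * (1 + c * q + d * p + #Edg * p * q) := by
        rw [card_bipartiteEdges_filter_fst, card_bipartiteEdges_filter_snd]
        gcongr
        exacts [hc e.1, hd e.2]

end BipartiteEdges

section RandomSubsets

variable {α β : Type*} [Fintype α] [Fintype β] [DecidableEq α] [DecidableEq β] (k l : ℕ)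

theorem card_powersetCard_prod_filter_mem_mem (a : α) (b : β) :
    (#{UV ∈ (univ : Finset α).powersetCard k ×ˢ (univ : Finset β).powersetCard l |
        a ∈ UV.1 ∧ b ∈ UV.2} : ℝ) =
      (Fintype.card α).choose k * (k / Fintype.card α) *
        ((Fintype.card β).choose l * (l / Fintype.card β)) := by
  rw [filter_product (a ∈ ·) (b ∈ ·), card_product, Nat.cast_mul,
    card_filter_mem_powersetCard (mem_univ _), card_filter_mem_powersetCard (mem_univ _),
    card_univ, card_univ]

theorem card_powersetCard_prod_filter_subset_subset_le (s : Finset α) (t : Finset β) :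
    (#{UV ∈ (univ : Finset α).powersetCard k ×ˢ (univ : Finset β).powersetCard l |
        s ⊆ UV.1 ∧ t ⊆ UV.2} : ℝ) ≤
      (Fintype.card α).choose k * (k / Fintype.card α) ^ #s *
        ((Fintype.card β).choose l * (l / Fintype.card β) ^ #t) := by
  rw [filter_product (s ⊆ ·) (t ⊆ ·), card_product, Nat.cast_mul, ← card_univ, ← card_univ]
  gcongr
  exacts [card_filter_powersetCard_subset_le (subset_univ s) k,
    card_filter_powersetCard_subset_le (subset_univ t) l]

end RandomSubsets

theorem card_powersetCard_prod_filter_exists_adj_ge {α β : Type*} [Fintype α] [Fintype β]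
    [DecidableEq α] [DecidableEq β] (G : α → β → Prop) [DecidableRel G] {c d : ℕ}
    (hc : ∀ a, #{b | G a b} ≤ c) (hd : ∀ b, #{a | G a b} ≤ d) (k l : ℕ) :
    (Fintype.card α).choose k * (Fintype.card β).choose l *
        (#(bipartiteEdges G) * (k / Fintype.card α) * (l / Fintype.card β)) *
        (2 - c * (l / Fintype.card β) - d * (k / Fintype.card α) -
          #(bipartiteEdges G) * (k / Fintype.card α) * (l / Fintype.card β)) ≤
      2 * (#{UV ∈ (univ : Finset α).powersetCard k ×ˢ (univ : Finset β).powersetCard l |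
        ∃ a ∈ UV.1, ∃ b ∈ UV.2, G a b} : ℝ) := by
  set p : ℝ := k / Fintype.card α
  set q : ℝ := l / Fintype.card β
  set C : ℝ := (Fintype.card α).choose k * (Fintype.card β).choose l
  set Edg := bipartiteEdges G
  set A : α × β → Finset (Finset α × Finset β) := fun e =>
    {UV ∈ (univ : Finset α).powersetCard k ×ˢ (univ : Finset β).powersetCard l |
      e.1 ∈ UV.1 ∧ e.2 ∈ UV.2}
  have hhit : {UV ∈ (univ : Finset α).powersetCard k ×ˢ (univ : Finset β).powersetCard l |
      ∃ a ∈ UV.1, ∃ b ∈ UV.2, G a b} = Edg.biUnion A := by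
    ext UV
    simp only [mem_filter, mem_biUnion, A, Edg, bipartiteEdges, mem_univ, true_and, Prod.exists]
    constructor
    · rintro ⟨hUV, a, ha, b, hb, hab⟩; exact ⟨a, b, hab, hUV, ha, hb⟩
    · rintro ⟨a, b, hab, hUV, ha, hb⟩; exact ⟨hUV, a, ha, b, hb, hab⟩
  have hsingle (e : α × β) : (#(A e) : ℝ) = C * (p * q) := by
    rw [card_powersetCard_prod_filter_mem_mem]; ring
  have hpair (e f : α × β) :
      (#(A e ∩ A f) : ℝ) ≤ C * (p ^ #{e.1, f.1} * q ^ #{e.2, f.2}) := by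
    have hinter : A e ∩ A f =
        {UV ∈ (univ : Finset α).powersetCard k ×ˢ (univ : Finset β).powersetCard l |
          {e.1, f.1} ⊆ UV.1 ∧ {e.2, f.2} ⊆ UV.2} := by
      ext UV
      simp only [A, mem_inter, mem_filter, insert_subset_iff, singleton_subset_iff]
      tauto
    rw [hinter]
    exact (card_powersetCard_prod_filter_subset_subset_le k l _ _).trans_eq (by ring)
  have hbonferroni : 3 * (∑ e ∈ Edg, #(A e) : ℝ) ≤
      2 * #(Edg.biUnion A) + ∑ e ∈ Edg, ∑ f ∈ Edg, (#(A e ∩ A f) : ℝ) := by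
    exact_mod_cast three_mul_sum_card_le_two_mul_card_biUnion_add Edg A
  have hsecond : ∑ e ∈ Edg, ∑ f ∈ Edg, (#(A e ∩ A f) : ℝ) ≤
      C * (#Edg * (p * q * (1 + c * q + d * p + #Edg * p * q))) := by
    refine le_trans ?_ (mul_le_mul_of_nonneg_left
      (sum_sum_pow_card_pair_le G hc hd (by positivity) (by positivity)) (by positivity))
    simp_rw [mul_sum]
    exact sum_le_sum fun e _ => sum_le_sum fun f _ => hpair e f
  simp only [hsingle, sum_const, nsmul_eq_mul] at hbonferroni
  rw [hhit]
  linarith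

theorem birthday_bound_of_second_moment {c k ℓ N : ℕ} {B C : ℝ} (hk : 1 ≤ k) (hC : 0 < C)
    (h : C * (c * k * ℓ / N) * (2 - c * (ℓ / N) - c * k / N - c * k * ℓ / N) ≤ 2 * B) :
    (c * k * ℓ / N : ℝ) * (1 - c ^ 2 * k ^ 2 / N - c * k * ℓ / N) ≤ B / C := by
  set x : ℝ := c * k * ℓ / N
  have hright : (c : ℝ) * (ℓ / N) ≤ x := by
    rw [mul_div_assoc']
    refine div_le_div_of_nonneg_right ?_ N.cast_nonneg
    exact_mod_cast Nat.mul_le_mul_right ℓ (Nat.le_mul_of_pos_right c hk)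
  have hleft : (c : ℝ) * k / N ≤ c ^ 2 * k ^ 2 / N := by
    refine div_le_div_of_nonneg_right ?_ N.cast_nonneg
    rw [← mul_pow]
    exact_mod_cast Nat.le_self_pow two_ne_zero (c * k)
  have hx : 0 ≤ x := by positivity
  have hw : (0 : ℝ) ≤ c ^ 2 * k ^ 2 / N := by positivity
  have hscalar :
      x * (1 - c ^ 2 * k ^ 2 / N - x) ≤ x * ((2 - c * (ℓ / N) - c * k / N - x) / 2) :=
    mul_le_mul_of_nonneg_left (by linarith) hx
  rw [le_div_iff₀ hC]
  nlinarith [mul_le_mul_of_nonneg_right hscalar hC.le]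

/-- **Birthday lemma for regular bipartite graphs.**
Consider a bipartite graph with `M` left-vertices of degree exactly `c` and `N`
right-vertices of degree exactly `d`.  Choosing a uniformly random `k`-subset of
the left side and, independently, a uniformly random `ℓ`-subset of the right side,
the probability that the induced subgraph contains at least one edge is at least
`(ckℓ/N)·(1 − c²k²/N − ckℓ/N)`. -/
theorem bipartite_birthday (M N c d k ℓ : ℕ) (E : Fin M → Fin N → Bool)
    (hc : ∀ i : Fin M, (univ.filter fun j => E i j).card = c)
    (hd : ∀ j : Fin N, (univ.filter fun i => E i j).card = d)
    (hk1 : 1 ≤ k) (hkM : k ≤ M) (hl1 : 1 ≤ ℓ) (hlN : ℓ ≤ N) :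
    ((c : ℝ) * k * ℓ / N) * (1 - (c : ℝ) ^ 2 * (k : ℝ) ^ 2 / N - (c : ℝ) * k * ℓ / N) ≤
      (((((univ : Finset (Fin M)).powersetCard k) ×ˢ
            ((univ : Finset (Fin N)).powersetCard ℓ)).filter
          fun p => ∃ i ∈ p.1, ∃ j ∈ p.2, E i j).card : ℝ) /
        ((((univ : Finset (Fin M)).powersetCard k).card : ℝ) *
          (((univ : Finset (Fin N)).powersetCard ℓ).card : ℝ)) := by
  have hM : (0 : ℝ) < M := by exact_mod_cast (by omega : 0 < M)
  have hN : (0 : ℝ) < N := by exact_mod_cast (by omega : 0 < N)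
  set G : Fin M → Fin N → Prop := fun i j => E i j
  have hedges : #(bipartiteEdges G) = M * c := by
    simpa using card_bipartiteEdges_of_forall_fst G hc
  have hcd : (M : ℝ) * c = N * d := by
    exact_mod_cast hedges.symm.trans (by simpa using card_bipartiteEdges_of_forall_snd G hd)
  have hmean : (M : ℝ) * c * (k / M) * (ℓ / N) = c * k * ℓ / N := by field_simp
  have hdp : (d : ℝ) * (k / M) = c * k / N := by
    rw [mul_div_assoc', div_eq_div_iff hM.ne' hN.ne']
    linear_combination -k * hcd
  have key := card_powersetCard_prod_filter_exists_adj_ge G (fun i => (hc i).le)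
    (fun j => (hd j).le) k ℓ
  simp only [Fintype.card_fin, hedges, Nat.cast_mul, hmean, hdp, G] at key
  simp only [card_powersetCard, card_univ, Fintype.card_fin]
  exact birthday_bound_of_second_moment hk1 (mul_pos (by exact_mod_cast Nat.choose_pos hkM)
    (by exact_mod_cast Nat.choose_pos hlN)) key
end

section
/- Let φ be a 3SAT instance with n variables and m clauses such that every clause contains exactly 3 distinct variables and every variable occurs in exactly d clauses (so 3m = dn), with m ≥ 2 and n ≥ 2. Let a_{ij} ∈ {0,1} be the incidence matrix (a_{ij} = 1 iff variable x_j occurs in clause C_i), and for I ⊆ [m], J ⊆ [n] let S_{IJ} := Σ_{i∈I, j∈J} a_{ij}. Fix integers 1 ≤ k ≤ m and 1 ≤ ℓ ≤ n, and let I and J be independent uniformly random subsets of [m] and [n] of sizes k and ℓ respectively. Then E[S_{IJ}²] ≤ 3m·kℓ/(mn) + 6m·kℓ(ℓ−1)/(mn(n−1)) + d(d−1)n·k(k−1)ℓ/(m(m−1)n) + 9m²·k(k−1)ℓ(ℓ−1)/(m(m−1)n(n−1)). -/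
/-!
Expanding the square gives `S_{IJ}² = ∑_{p, q ∈ Z} [p ∈ I × J] [q ∈ I × J]`, and by independence
of `I` and `J` the pair `(p, q)` contributes `P({p.1, q.1} ⊆ I) · P({p.2, q.2} ⊆ J)`.  A fixed
`t`-set lies in a uniform `k`-subset of an `M`-set with probability `C(k, t) / C(M, t)`, i.e.
`k / M` or `k (k - 1) / (M (M - 1))`.  For fixed `p ∈ Z` the partners `q ∈ Z` are `p` itself, the
`2` other incidences of its clause, the `d - 1` other incidences of its variable, and `3m - 2 - d`
incidences sharing neither; summing over the `|Z| = 3m = dn` choices of `p` gives the bound.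
-/

open Finset

/-- `Z`: the set of (clause index, variable index) incidence pairs of `φ`. -/
def Zset {n m : ℕ} (φ : Fin m → Clause3 n) : Finset (Fin m × Fin n) :=
  univ.filter fun p => ∃ t : Fin 3, (φ p.1).var t = p.2

/-- The winning predicate of the birthday repetition game `G_φ^{k×ℓ}`:
for all `i ∈ I` and `j ∈ J` such that variable `j` occurs in clause `i`,
Merlin₁'s assignment to clause `i` satisfies it and agrees with Merlin₂'s
bit for variable `j`. -/
def bdWin {n m : ℕ} (φ : Fin m → Clause3 n) (I : Finset (Fin m)) (J : Finset (Fin n))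
    (a : Fin m → Fin 3 → Bool) (b : Fin n → Bool) : Prop :=
  ∀ i ∈ I, ∀ j ∈ J, ∀ t : Fin 3, (φ i).var t = j →
    ((φ i).satLocal (a i) ∧ a i t = b j)

instance {n m : ℕ} (φ : Fin m → Clause3 n) (I : Finset (Fin m)) (J : Finset (Fin n))
    (a : Fin m → Fin 3 → Bool) (b : Fin n → Bool) : Decidable (bdWin φ I J a b) := by
  unfold bdWin; infer_instance

/-- The value of the birthday repetition game `G_φ^{k×ℓ}`: Arthur sends a uniformly
random `k`-subset `I` of clause indices to Merlin₁ and, independently, a uniformly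
random `ℓ`-subset `J` of variable indices to Merlin₂; their (deterministic)
strategies answer with assignments to the clauses in `I`, resp. bits for the
variables in `J`. -/
noncomputable def bdVal {n m : ℕ} (φ : Fin m → Clause3 n) (k ℓ : ℕ) : ℝ :=
  ⨆ a : Finset (Fin m) → Fin m → Fin 3 → Bool, ⨆ b : Finset (Fin n) → Fin n → Bool,
    (∑ I ∈ (univ : Finset (Fin m)).powersetCard k,
        ∑ J ∈ (univ : Finset (Fin n)).powersetCard ℓ,
          if bdWin φ I J (a I) (b J) then (1 : ℝ) else 0) /
      ((((univ : Finset (Fin m)).powersetCard k).card : ℝ) *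
        (((univ : Finset (Fin n)).powersetCard ℓ).card : ℝ))

/-- The probability that the pair `(I, J)` is produced by the correlated
distribution `D`: choose `(i,j)` uniformly from `Z`, then `I` uniformly among
`k`-subsets of `[m]` containing `i` and, independently, `J` uniformly among
`ℓ`-subsets of `[n]` containing `j`. -/
noncomputable def prD {n m : ℕ} (φ : Fin m → Clause3 n) (k ℓ : ℕ)
    (I : Finset (Fin m)) (J : Finset (Fin n)) : ℝ :=
  (∑ p ∈ Zset φ,
      if p.1 ∈ I ∧ p.2 ∈ J then
        (1 : ℝ) /
          ((((((univ : Finset (Fin m)).powersetCard k).filter fun I' => p.1 ∈ I').card : ℝ)) *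
            (((((univ : Finset (Fin n)).powersetCard ℓ).filter fun J' => p.2 ∈ J').card : ℝ)))
      else 0) / ((Zset φ).card : ℝ)

/-- The probability that the pair `(I, J)` is produced by the uniform
distribution `U` on pairs of a `k`-subset of `[m]` and an `ℓ`-subset of `[n]`. -/
noncomputable def prU (m n k ℓ : ℕ) : ℝ :=
  1 / ((((univ : Finset (Fin m)).powersetCard k).card : ℝ) *
    (((univ : Finset (Fin n)).powersetCard ℓ).card : ℝ))

section SubsetCounting

variable {α : Type*} [DecidableEq α]

theorem card_filter_powersetCard_subset_mul_choose (s T : Finset α) (hT : T ⊆ s) (k : ℕ) :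
    #{I ∈ s.powersetCard k | T ⊆ I} * (#s).choose #T = (#s).choose k * k.choose #T := by
  by_cases hTk : #T ≤ k
  · rw [card_filter_powersetCard_subset T s k hT hTk, Nat.choose_mul hTk, mul_comm]
  · have hempty : {I ∈ s.powersetCard k | T ⊆ I} = ∅ := by
      refine filter_eq_empty_iff.mpr fun I hI hTI => ?_
      have := card_le_card hTI
      rw [(mem_powersetCard.mp hI).2] at this
      omega
    rw [hempty, Nat.choose_eq_zero_of_lt (not_le.mp hTk)]
    simp

variable [Fintype α]

theorem card_filter_powersetCard_pair_subset_div_choose {k : ℕ} (hk : k ≤ Fintype.card α)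
    (i i' : α) :
    (#{I ∈ (univ : Finset α).powersetCard k | {i, i'} ⊆ I} : ℝ) / (Fintype.card α).choose k
      = if i = i' then (k : ℝ) / Fintype.card α
        else (k.choose 2 : ℝ) / (Fintype.card α).choose 2 := by
  have hcount := card_filter_powersetCard_subset_mul_choose univ {i, i'} (subset_univ _) k
  rw [card_univ] at hcount
  have hT : #({i, i'} : Finset α) ≤ Fintype.card α := card_le_univ _
  have hchoose : ((Fintype.card α).choose #({i, i'} : Finset α) : ℝ) ≠ 0 := by
    exact_mod_cast (Nat.choose_pos hT).ne'
  have hchoosek : ((Fintype.card α).choose k : ℝ) ≠ 0 := by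
    exact_mod_cast (Nat.choose_pos hk).ne'
  have hratio : (#{I ∈ (univ : Finset α).powersetCard k | {i, i'} ⊆ I} : ℝ)
      / (Fintype.card α).choose k
      = (k.choose #({i, i'} : Finset α) : ℝ) / (Fintype.card α).choose #({i, i'} : Finset α) := by
    rw [div_eq_div_iff hchoosek hchoose, mul_comm (k.choose _ : ℝ)]
    exact_mod_cast hcount
  rw [hratio]
  split_ifs with h
  · subst h
    simp
  · rw [card_pair h]

end SubsetCounting

theorem sum_sum_card_product_inter_sq {α β : Type*} [DecidableEq α] [DecidableEq β]
    (𝒜 : Finset (Finset α)) (ℬ : Finset (Finset β)) (Z : Finset (α × β)) :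
    ∑ I ∈ 𝒜, ∑ J ∈ ℬ, #((I ×ˢ J) ∩ Z) ^ 2
      = ∑ p ∈ Z, ∑ q ∈ Z, #{I ∈ 𝒜 | {p.1, q.1} ⊆ I} * #{J ∈ ℬ | {p.2, q.2} ⊆ J} := by
  have hsq : ∀ I J, #((I ×ˢ J) ∩ Z) ^ 2 = ∑ p ∈ Z, ∑ q ∈ Z,
      (if {p.1, q.1} ⊆ I then 1 else 0) * (if {p.2, q.2} ⊆ J then 1 else 0) := by
    intro I J
    rw [inter_comm, ← filter_mem_eq_inter, card_filter, sq, sum_mul_sum]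
    refine sum_congr rfl fun p _ => sum_congr rfl fun q _ => ?_
    simp only [mem_product, insert_subset_iff, singleton_subset_iff]
    split_ifs <;> simp_all
  simp_rw [hsq, card_filter, sum_mul_sum]
  calc _ = ∑ I ∈ 𝒜, ∑ p ∈ Z, ∑ q ∈ Z, ∑ J ∈ ℬ,
        (if {p.1, q.1} ⊆ I then 1 else 0) * (if {p.2, q.2} ⊆ J then 1 else 0) :=
        sum_congr rfl fun _ _ => by rw [sum_comm]; exact sum_congr rfl fun _ _ => sum_comm
    _ = _ := by rw [sum_comm]; exact sum_congr rfl fun _ _ => sum_comm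

theorem sum_ite_fst_eq_mul_ite_snd_eq {α β R : Type*} [DecidableEq α] [DecidableEq β]
    [CommRing R] (Z : Finset (α × β)) {p : α × β} (hp : p ∈ Z) (a a' b b' : R) :
    ∑ q ∈ Z, (if p.1 = q.1 then a else a') * (if p.2 = q.2 then b else b')
      = (a - a') * (b - b') + #{q ∈ Z | p.1 = q.1} * ((a - a') * b')
        + #{q ∈ Z | p.2 = q.2} * (a' * (b - b')) + #Z * (a' * b') := by
  have hpointwise : ∀ q, (if p.1 = q.1 then a else a') * (if p.2 = q.2 then b else b')
      = (if p = q then (a - a') * (b - b') else 0) + (if p.1 = q.1 then (a - a') * b' else 0)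
        + (if p.2 = q.2 then a' * (b - b') else 0) + a' * b' := by
    intro q
    by_cases h1 : p.1 = q.1 <;> by_cases h2 : p.2 = q.2 <;>
      simp [h1, h2, Prod.ext_iff] <;> ring
  simp only [hpointwise, sum_add_distrib, sum_ite_eq, if_pos hp, ← sum_filter, sum_const,
    nsmul_eq_mul]

theorem sum_sum_card_product_inter_sq_div_eq {α β : Type*} [Fintype α] [Fintype β]
    [DecidableEq α] [DecidableEq β] (Z : Finset (α × β)) {k ℓ : ℕ} (hk : k ≤ Fintype.card α)
    (hℓ : ℓ ≤ Fintype.card β) :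
    (∑ I ∈ (univ : Finset α).powersetCard k, ∑ J ∈ (univ : Finset β).powersetCard ℓ,
        (#((I ×ˢ J) ∩ Z) : ℝ) ^ 2) /
        ((#((univ : Finset α).powersetCard k) : ℝ) * #((univ : Finset β).powersetCard ℓ))
      = ∑ p ∈ Z, ∑ q ∈ Z,
        (if p.1 = q.1 then (k : ℝ) / Fintype.card α
          else (k.choose 2 : ℝ) / (Fintype.card α).choose 2)
        * (if p.2 = q.2 then (ℓ : ℝ) / Fintype.card β
          else (ℓ.choose 2 : ℝ) / (Fintype.card β).choose 2) := by
  simp only [← card_filter_powersetCard_pair_subset_div_choose hk,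
    ← card_filter_powersetCard_pair_subset_div_choose hℓ, card_powersetCard, card_univ]
  rw_mod_cast [sum_sum_card_product_inter_sq]
  simp only [sum_div, Nat.cast_sum, Nat.cast_mul, mul_div_mul_comm]

section Incidences

variable {n m : ℕ} (φ : Fin m → Clause3 n)

theorem card_Zset_filter_fst_eq (i : Fin m) : #{q ∈ Zset φ | i = q.1} = 3 := by
  have h : {q ∈ Zset φ | i = q.1} = {i} ×ˢ univ.image (φ i).var := by
    ext ⟨i', j⟩
    simp only [Zset, mem_filter, mem_univ, true_and, mem_product, mem_singleton, mem_image]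
    constructor
    · rintro ⟨h, rfl⟩
      exact ⟨rfl, h⟩
    · rintro ⟨rfl, h⟩
      exact ⟨h, rfl⟩
  rw [h, card_product, card_singleton, card_image_of_injective _ (φ i).inj]
  simp

theorem card_Zset_filter_snd_eq (j : Fin n) :
    #{q ∈ Zset φ | j = q.2} = #{i | ∃ t : Fin 3, (φ i).var t = j} := by
  have h : {q ∈ Zset φ | j = q.2} =
      ({i | ∃ t : Fin 3, (φ i).var t = j} : Finset (Fin m)).map
        ⟨fun i => (i, j), fun _ _ h => (Prod.ext_iff.mp h).1⟩ := by
    ext ⟨i, j'⟩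
    simp only [Zset, mem_filter, mem_univ, true_and, mem_map]
    constructor
    · rintro ⟨h, rfl⟩
      exact ⟨i, h, rfl⟩
    · rintro ⟨_, h, he⟩
      obtain ⟨rfl, rfl⟩ := Prod.ext_iff.mp he
      exact ⟨h, rfl⟩
  rw [h, card_map]

theorem card_Zset : #(Zset φ) = 3 * m := by
  rw [card_eq_sum_card_fiberwise (f := Prod.fst) (t := univ) fun _ _ => mem_univ _]
  simp_rw [eq_comm (a := Prod.fst _), card_Zset_filter_fst_eq]
  simp [mul_comm]

theorem card_Zset_eq_sum_degree :
    #(Zset φ) = ∑ j, #{i | ∃ t : Fin 3, (φ i).var t = j} := by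
  rw [card_eq_sum_card_fiberwise (f := Prod.snd) (t := univ) fun _ _ => mem_univ _]
  simp_rw [eq_comm (a := Prod.snd _), card_Zset_filter_snd_eq]

variable {d : ℕ}

theorem degree_mul_eq_three_mul (hbal : ∀ j : Fin n, #{i | ∃ t : Fin 3, (φ i).var t = j} = d) :
    d * n = 3 * m := by
  have := card_Zset_eq_sum_degree φ
  simp only [hbal, card_Zset, sum_const, card_univ, Fintype.card_fin, smul_eq_mul] at this
  rw [this, mul_comm]

theorem sum_Zset_ite_fst_eq_mul_ite_snd_eq
    (hbal : ∀ j : Fin n, #{i | ∃ t : Fin 3, (φ i).var t = j} = d) {p : Fin m × Fin n}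
    (hp : p ∈ Zset φ) (a a' b b' : ℝ) :
    ∑ q ∈ Zset φ, (if p.1 = q.1 then a else a') * (if p.2 = q.2 then b else b')
      = a * b + 2 * (a * b') + (d - 1) * (a' * b) + (3 * m - 2 - d) * (a' * b') := by
  rw [sum_ite_fst_eq_mul_ite_snd_eq _ hp, card_Zset_filter_fst_eq, card_Zset_filter_snd_eq,
    hbal, card_Zset]
  push_cast
  ring

end Incidences

theorem expected_sq_incidence_bound_general {n m : ℕ} (d : ℕ)
    (φ : Fin m → Clause3 n)
    (hbal : ∀ j : Fin n, (univ.filter fun i => ∃ t : Fin 3, (φ i).var t = j).card = d)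
    (k ℓ : ℕ) (hkm : k ≤ m) (hln : ℓ ≤ n) :
    (∑ I ∈ (univ : Finset (Fin m)).powersetCard k,
        ∑ J ∈ (univ : Finset (Fin n)).powersetCard ℓ,
          (((I ×ˢ J) ∩ Zset φ).card : ℝ) ^ 2) /
        ((((univ : Finset (Fin m)).powersetCard k).card : ℝ) *
          (((univ : Finset (Fin n)).powersetCard ℓ).card : ℝ))
      ≤ 3 * (m : ℝ) * ((k : ℝ) * ℓ) / ((m : ℝ) * n)
        + 6 * (m : ℝ) * ((k : ℝ) * ℓ * ((ℓ : ℝ) - 1)) / ((m : ℝ) * n * ((n : ℝ) - 1))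
        + (d : ℝ) * ((d : ℝ) - 1) * n * ((k : ℝ) * ((k : ℝ) - 1) * ℓ) /
            ((m : ℝ) * ((m : ℝ) - 1) * n)
        + 9 * (m : ℝ) ^ 2 * ((k : ℝ) * ((k : ℝ) - 1) * ℓ * ((ℓ : ℝ) - 1)) /
            ((m : ℝ) * ((m : ℝ) - 1) * n * ((n : ℝ) - 1)) := by
  set A₁ : ℝ := k / m
  set A₂ : ℝ := k.choose 2 / m.choose 2
  set B₁ : ℝ := ℓ / n
  set B₂ : ℝ := ℓ.choose 2 / n.choose 2
  have hdn : (d : ℝ) * n = 3 * m := by exact_mod_cast degree_mul_eq_three_mul φ hbal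
  calc _ = ∑ p ∈ Zset φ, ∑ q ∈ Zset φ,
        (if p.1 = q.1 then A₁ else A₂) * (if p.2 = q.2 then B₁ else B₂) := by
        rw [sum_sum_card_product_inter_sq_div_eq _ (by simpa using hkm) (by simpa using hln)]
        simp only [Fintype.card_fin]
        rfl
    _ = 3 * m * (A₁ * B₁ + 2 * (A₁ * B₂) + (d - 1) * (A₂ * B₁) + (3 * m - 2 - d) * (A₂ * B₂)) := by
        rw [sum_congr rfl fun p hp => sum_Zset_ite_fst_eq_mul_ite_snd_eq φ hbal hp _ _ _ _,
          sum_const, card_Zset, nsmul_eq_mul]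
        push_cast
        ring
    _ ≤ _ := by
        have hgap : 0 ≤ 3 * m * (d + 2) * (A₂ * B₂) := by positivity
        rw [← sub_nonneg]
        convert hgap using 1
        simp only [A₁, A₂, B₁, B₂, Nat.cast_choose_two]
        -- as atoms, `m - 1` and `n - 1` let `ring` split the inverses of the denominators
        generalize (m : ℝ) - 1 = m'
        generalize (n : ℝ) - 1 = n'
        linear_combination ((d - 1) * (k * (k - 1) * ℓ) / (m * m' * n) : ℝ) * hdn

/-- Second-moment bound on `S_{IJ} = |(I×J) ∩ Z|` for a balanced 3SAT instance:
every clause has exactly 3 distinct variables, every variable occurs in exactly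
`d` clauses, and `I`, `J` are independent uniformly random subsets of sizes `k`
and `ℓ`. -/
theorem expected_sq_incidence_bound {n m : ℕ} (hm : 2 ≤ m) (hn : 2 ≤ n) (d : ℕ)
    (φ : Fin m → Clause3 n)
    (hbal : ∀ j : Fin n, (univ.filter fun i => ∃ t : Fin 3, (φ i).var t = j).card = d)
    (k ℓ : ℕ) (hk1 : 1 ≤ k) (hkm : k ≤ m) (hl1 : 1 ≤ ℓ) (hln : ℓ ≤ n) :
    (∑ I ∈ (univ : Finset (Fin m)).powersetCard k,
        ∑ J ∈ (univ : Finset (Fin n)).powersetCard ℓ,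
          (((I ×ˢ J) ∩ Zset φ).card : ℝ) ^ 2) /
        ((((univ : Finset (Fin m)).powersetCard k).card : ℝ) *
          (((univ : Finset (Fin n)).powersetCard ℓ).card : ℝ))
      ≤ 3 * (m : ℝ) * ((k : ℝ) * ℓ) / ((m : ℝ) * n)
        + 6 * (m : ℝ) * ((k : ℝ) * ℓ * ((ℓ : ℝ) - 1)) / ((m : ℝ) * n * ((n : ℝ) - 1))
        + (d : ℝ) * ((d : ℝ) - 1) * n * ((k : ℝ) * ((k : ℝ) - 1) * ℓ) /
            ((m : ℝ) * ((m : ℝ) - 1) * n)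
        + 9 * (m : ℝ) ^ 2 * ((k : ℝ) * ((k : ℝ) - 1) * ℓ * ((ℓ : ℝ) - 1)) /
            ((m : ℝ) * ((m : ℝ) - 1) * n * ((n : ℝ) - 1)) :=
  expected_sq_incidence_bound_general d φ hbal k ℓ hkm hln
end

section
/- Let φ be a 3SAT instance with n variables and m clauses, each clause containing exactly 3 distinct variables, and let Z := {(i,j) ∈ [m]×[n] : variable x_j occurs in clause C_i}. Then for all integers 1 ≤ k ≤ m and 1 ≤ ℓ ≤ n, ω(G_φ^{k×ℓ}) ≤ Pr[(I×J) ∩ Z = ∅] + (3kℓ/n)·ω(G_φ), where I is a uniformly random k-element subset of [m] and J is an independent uniformly random ℓ-element subset of [n]. -/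
open Finset

/-! Fix strategies `a`, `b` of the birthday game. If `I × J` meets `Z` at `(i, x_j)`, a win on
`(I, J)` is a win of the restricted strategies `a I`, `b J` on the question `(C_i, x_j)` of `G_φ`.
So the number of won pairs is at most the number of pairs missing `Z` plus the payoff of `G_φ`
summed over incidences `(i, j)` and over all `k`-sets `I ∋ i` and `ℓ`-sets `J ∋ j`. Enumerating
these `C(m-1, k-1)` sets `I` and `C(n-1, ℓ-1)` sets `J` splits that sum into
`C(m-1, k-1) * C(n-1, ℓ-1)` plays of `G_φ` by single strategies, each worth at most `3m ω(G_φ)`.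
Since `m C(m-1, k-1) = k C(m, k)` and `n C(n-1, ℓ-1) = ℓ C(n, ℓ)`, normalising by
`C(m, k) C(n, ℓ)` leaves the factor `3kℓ/n`. -/

theorem Finset.sum_eq_sum_fin_of_card_eq {α M : Type*} [AddCommMonoid M] {s : Finset α} {N : ℕ}
    (hs : #s = N) (F : α → M) :
    ∑ u ∈ s, F u = ∑ r : Fin N, F ((s.equivFinOfCardEq hs).symm r) := by
  rw [← Finset.sum_coe_sort, ← (s.equivFinOfCardEq hs).symm.sum_comp]

theorem Nat.mul_choose_sub_one_sub_one (n : ℕ) {k : ℕ} (hk : 0 < k) :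
    n * (n - 1).choose (k - 1) = k * n.choose k := by
  obtain ⟨k, rfl⟩ := Nat.exists_eq_add_of_lt hk
  cases n with
  | zero => simp
  | succ n => simpa [mul_comm] using Nat.add_one_mul_choose_eq n k

theorem card_filter_mem_powersetCard_univ {α : Type*} [Fintype α] [DecidableEq α] {k : ℕ}
    (hk : 1 ≤ k) (a : α) :
    #{I ∈ (univ : Finset α).powersetCard k | a ∈ I} = (Fintype.card α - 1).choose (k - 1) := by
  simpa [← singleton_subset_iff] using
    card_filter_powersetCard_subset {a} univ k (subset_univ _) (by simpa using hk)

theorem sum_sum_sum_le_mul_of_forall_selection {χ ι κ α β : Type*} [Fintype χ]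
    (s : ι → Finset α) (t : κ → Finset β) {N M : ℕ} (hs : ∀ i, #(s i) = N)
    (ht : ∀ j, #(t j) = M) (p : χ → ι) (q : χ → κ) (f : χ → α → β → ℝ) {c : ℝ}
    (hc : ∀ g : ι → α, (∀ i, g i ∈ s i) → ∀ h : κ → β, (∀ j, h j ∈ t j) →
      ∑ x, f x (g (p x)) (h (q x)) ≤ c) :
    ∑ x, ∑ u ∈ s (p x), ∑ v ∈ t (q x), f x u v ≤ N * M * c := by
  set g : Fin N → ι → α := fun r i => (((s i).equivFinOfCardEq (hs i)).symm r : α)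
  set h : Fin M → κ → β := fun r j => (((t j).equivFinOfCardEq (ht j)).symm r : β)
  calc ∑ x, ∑ u ∈ s (p x), ∑ v ∈ t (q x), f x u v
      = ∑ r, ∑ r', ∑ x, f x (g r (p x)) (h r' (q x)) := by
        simp only [sum_eq_sum_fin_of_card_eq (hs _), sum_eq_sum_fin_of_card_eq (ht _)]
        rw [sum_comm]
        exact sum_congr rfl fun _ _ => sum_comm
    _ ≤ ∑ _r : Fin N, ∑ _r' : Fin M, c := by
        gcongr with r _ r' _
        exact hc (g r) (fun i => coe_mem _) (h r') (fun j => coe_mem _)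
    _ = N * M * c := by simp [mul_assoc]

section Game

variable {n m : ℕ} (φ : Fin m → Clause3 n)

def cvPayoff (A : Fin m → Fin 3 → Bool) (B : Fin n → Bool) (i : Fin m) (t : Fin 3) : ℝ :=
  if (φ i).satLocal (A i) ∧ A i t = B ((φ i).var t) then 1 else 0

theorem cvPayoff_nonneg (A : Fin m → Fin 3 → Bool) (B : Fin n → Bool) (i : Fin m)
    (t : Fin 3) : 0 ≤ cvPayoff φ A B i t := by
  unfold cvPayoff; positivity

theorem sum_cvPayoff_le (hm : 0 < m) (A : Fin m → Fin 3 → Bool) (B : Fin n → Bool) :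
    ∑ i, ∑ t, cvPayoff φ A B i t ≤ 3 * m * cvVal φ := by
  have h : (∑ i, ∑ t, cvPayoff φ A B i t) / (3 * m) ≤ cvVal φ :=
    (le_ciSup (Set.finite_range _).bddAbove B).trans
      (le_ciSup (f := fun A => ⨆ B, (∑ i, ∑ t, cvPayoff φ A B i t) / (3 * (m : ℝ)))
        (Set.finite_range _).bddAbove A)
  rwa [div_le_iff₀' (by positivity)] at h

theorem bdWin_indicator_le (I : Finset (Fin m)) (J : Finset (Fin n))
    (A : Fin m → Fin 3 → Bool) (B : Fin n → Bool) :
    (if bdWin φ I J A B then (1 : ℝ) else 0) ≤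
      (if (I ×ˢ J) ∩ Zset φ = ∅ then 1 else 0) +
        ∑ i, ∑ t, if i ∈ I ∧ (φ i).var t ∈ J then cvPayoff φ A B i t else 0 := by
  set F : Fin m → Fin 3 → ℝ := fun i t =>
    if i ∈ I ∧ (φ i).var t ∈ J then cvPayoff φ A B i t else 0
  have hF : ∀ i t, 0 ≤ F i t := fun i t => ite_nonneg (cvPayoff_nonneg φ A B i t) le_rfl
  have hsum : 0 ≤ ∑ i, ∑ t, F i t := sum_nonneg fun i _ => sum_nonneg fun t _ => hF i t
  by_cases hmiss : (I ×ˢ J) ∩ Zset φ = ∅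
  · rw [if_pos hmiss]
    split_ifs <;> linarith
  rw [if_neg hmiss, zero_add]
  by_cases hwin : bdWin φ I J A B
  · obtain ⟨⟨i, j⟩, hij⟩ := nonempty_iff_ne_empty.mpr hmiss
    simp only [mem_inter, mem_product, Zset, mem_filter, mem_univ, true_and] at hij
    obtain ⟨⟨hi, hj⟩, t, rfl⟩ := hij
    calc (if bdWin φ I J A B then (1 : ℝ) else 0) = F i t := by
          rw [if_pos hwin]
          simp only [F, cvPayoff]
          rw [if_pos (And.intro hi hj), if_pos (hwin i hi _ hj t rfl)]
      _ ≤ ∑ t, F i t := single_le_sum (fun t _ => hF i t) (mem_univ t)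
      _ ≤ ∑ i, ∑ t, F i t := single_le_sum (fun i _ => sum_nonneg fun t _ => hF i t) (mem_univ i)
  · rwa [if_neg hwin]

theorem sum_bdWin_le (𝓘 : Finset (Finset (Fin m))) (𝓙 : Finset (Finset (Fin n)))
    (a : Finset (Fin m) → Fin m → Fin 3 → Bool) (b : Finset (Fin n) → Fin n → Bool) :
    ∑ I ∈ 𝓘, ∑ J ∈ 𝓙, (if bdWin φ I J (a I) (b J) then (1 : ℝ) else 0) ≤
      (((𝓘 ×ˢ 𝓙).filter fun p => (p.1 ×ˢ p.2) ∩ Zset φ = ∅).card : ℝ) +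
        ∑ i, ∑ t, ∑ I ∈ 𝓘 with i ∈ I, ∑ J ∈ 𝓙 with (φ i).var t ∈ J,
          cvPayoff φ (a I) (b J) i t := by
  calc ∑ I ∈ 𝓘, ∑ J ∈ 𝓙, (if bdWin φ I J (a I) (b J) then (1 : ℝ) else 0)
      ≤ ∑ I ∈ 𝓘, ∑ J ∈ 𝓙, ((if (I ×ˢ J) ∩ Zset φ = ∅ then 1 else 0) +
          ∑ i, ∑ t, if i ∈ I ∧ (φ i).var t ∈ J then cvPayoff φ (a I) (b J) i t else 0) := by
        gcongr with I _ J _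
        exact bdWin_indicator_le φ I J (a I) (b J)
    _ = _ := by
        simp only [sum_add_distrib]
        congr 1
        · rw [← sum_product', sum_boole]
        · simp only [sum_filter, ite_sum_zero, ← ite_and]
          simp_rw [sum_comm (s := 𝓙) (t := univ), sum_comm (s := 𝓘) (t := univ)]

theorem sum_cvPayoff_containing_le {k ℓ : ℕ} (hk : 1 ≤ k) (hl : 1 ≤ ℓ) (hm : 0 < m)
    (a : Finset (Fin m) → Fin m → Fin 3 → Bool) (b : Finset (Fin n) → Fin n → Bool) :
    ∑ i, ∑ t, ∑ I ∈ (univ : Finset (Fin m)).powersetCard k with i ∈ I,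
        ∑ J ∈ (univ : Finset (Fin n)).powersetCard ℓ with (φ i).var t ∈ J,
          cvPayoff φ (a I) (b J) i t ≤
      (m - 1).choose (k - 1) * (n - 1).choose (ℓ - 1) * (3 * m * cvVal φ) := by
  have hcardI := card_filter_mem_powersetCard_univ (α := Fin m) hk
  have hcardJ := card_filter_mem_powersetCard_univ (α := Fin n) hl
  simp only [Fintype.card_fin] at hcardI hcardJ
  have h := sum_sum_sum_le_mul_of_forall_selection _ _ hcardI hcardJ Prod.fst
    (fun x : Fin m × Fin 3 => (φ x.1).var x.2) (fun x I J => cvPayoff φ (a I) (b J) x.1 x.2)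
    (c := 3 * m * cvVal φ) fun g _ h _ => by
      rw [Fintype.sum_prod_type]
      exact sum_cvPayoff_le φ hm (fun i => a (g i) i) (fun j => b (h j) j)
  simpa only [Fintype.sum_prod_type] using h

end Game

/-- The value of the birthday repetition game is at most the probability that the
random rectangle `I × J` misses the incidence set `Z`, plus `(3kℓ/n)` times the
value of the clause/variable game. -/
theorem bdVal_le_miss_prob_add {n m : ℕ} (φ : Fin m → Clause3 n) (k ℓ : ℕ)
    (hk1 : 1 ≤ k) (hkm : k ≤ m) (hl1 : 1 ≤ ℓ) (hln : ℓ ≤ n) :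
    bdVal φ k ℓ ≤
      (((((univ : Finset (Fin m)).powersetCard k) ×ˢ
            ((univ : Finset (Fin n)).powersetCard ℓ)).filter
          fun p => (p.1 ×ˢ p.2) ∩ Zset φ = ∅).card : ℝ) /
        ((((univ : Finset (Fin m)).powersetCard k).card : ℝ) *
          (((univ : Finset (Fin n)).powersetCard ℓ).card : ℝ))
      + (3 * (k : ℝ) * ℓ / (n : ℝ)) * cvVal φ := by
  have hm : 0 < m := by omega
  have hn : (n : ℝ) ≠ 0 := Nat.cast_ne_zero.mpr (by omega)
  have hN : (m * (m - 1).choose (k - 1) : ℝ) = k * m.choose k := by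
    exact_mod_cast Nat.mul_choose_sub_one_sub_one m (by omega)
  have hM : (n * (n - 1).choose (ℓ - 1) : ℝ) = ℓ * n.choose ℓ := by
    exact_mod_cast Nat.mul_choose_sub_one_sub_one n (by omega)
  have hcard : ((((univ : Finset (Fin m)).powersetCard k).card : ℝ) *
      (((univ : Finset (Fin n)).powersetCard ℓ).card : ℝ)) = m.choose k * n.choose ℓ := by
    simp
  have hpos : (0 : ℝ) < m.choose k * n.choose ℓ := by
    have := Nat.choose_pos hkm
    have := Nat.choose_pos hln
    positivity
  refine ciSup_le fun a => ciSup_le fun b => ?_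
  rw [hcard, div_le_iff₀ hpos, add_mul, div_mul_cancel₀ _ hpos.ne']
  calc _ ≤ _ := sum_bdWin_le φ _ _ a b
    _ ≤ _ + (m - 1).choose (k - 1) * (n - 1).choose (ℓ - 1) * (3 * m * cvVal φ) := by
      gcongr
      exact sum_cvPayoff_containing_le φ hk1 hl1 hm a b
    _ = _ := by
      congr 1
      field_simp
      linear_combination (cvVal φ * (n * (n - 1).choose (ℓ - 1))) * hN +
        (cvVal φ * (k * m.choose k)) * hM
end

section
/- Let G = (X,Y,A,B,V) be a two-player free game, let a : X → A be any function, let ε > 0, and let κ be an integer with 1 ≤ κ ≤ |X|. If S is a uniformly random κ-element subset of X, then with probability at least 1 − 2e^{−ε²κ}·|Y|·|B| over the choice of S, for every y ∈ Y and every b ∈ B we have |E_{x∈S}[V(x,y,a(x),b)] − E_{x∈X}[V(x,y,a(x),b)]| ≤ ε, where both expectations are over a uniformly random element of the indicated set. -/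
/-!
Hoeffding's inequality for sampling without replacement, followed by a union bound over
`Y × B`. Let `f` take values in `[a, b]` with mean `μ` over `X`, and put `g = exp (l • f)`
with `l ≥ 0`. By Markov, the number of `κ`-subsets `S` with `∑_{x ∈ S} f x ≥ κ (μ + ε)` is at
most `e^{-lκ(μ+ε)} e_κ(g)`, where `e_κ` is the elementary symmetric sum over `κ`-subsets.
Maclaurin's inequality bounds `e_κ(g)` by `C(|X|, κ)` times the `κ`-th power of the mean of `g`,
and Hoeffding's lemma bounds that mean by `exp (l μ + (b - a)² l² / 8)`. With `l = 4ε / (b - a)²`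
this gives `C(|X|, κ) e^{-2ε²κ/(b-a)²}`; the lower tail is the upper tail of `-f`.
-/

open Finset
open scoped Classical

/-- The value `ω(G)` of the two-player free game `G = (X,Y,A,B,V)`: the maximum
over deterministic strategies `a : X → A`, `b : Y → B` of the expected
verification value for independent uniform questions. -/
noncomputable def gameVal {X Y A B : Type} [Fintype X] [Fintype Y]
    (V : X → Y → A → B → ℝ) : ℝ :=
  ⨆ a : X → A, ⨆ b : Y → B,
    (∑ x : X, ∑ y : Y, V x y (a x) (b y)) /
      ((Fintype.card X : ℝ) * (Fintype.card Y : ℝ))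

/-- The value `ω(G_S)` of the subgame in which Merlin₁'s question is uniform over
`S ⊆ X` instead of `X`. -/
noncomputable def subGameVal {X Y A B : Type} [Fintype X] [Fintype Y]
    (V : X → Y → A → B → ℝ) (S : Finset X) : ℝ :=
  ⨆ a : X → A, ⨆ b : Y → B,
    (∑ x ∈ S, ∑ y : Y, V x y (a x) (b y)) /
      ((S.card : ℝ) * (Fintype.card Y : ℝ))

open Real MeasureTheory ProbabilityTheory

theorem integral_uniformOn_univ {ι : Type*} [Fintype ι] [MeasurableSpace ι]
    [MeasurableSingletonClass ι] (g : ι → ℝ) :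
    ∫ i, g i ∂uniformOn (Set.univ : Set ι) = (∑ i, g i) / Fintype.card ι := by
  rw [integral_fintype .of_finite]
  simp [measureReal_def, uniformOn_univ, div_eq_inv_mul, Finset.mul_sum]

theorem sum_exp_mul_div_card_le {ι : Type*} [Fintype ι] {f : ι → ℝ} {a b : ℝ}
    (hf : ∀ i, f i ∈ Set.Icc a b) (t : ℝ) :
    (∑ i, exp (t * f i)) / Fintype.card ι ≤
      exp (t * ((∑ i, f i) / Fintype.card ι) + (b - a) ^ 2 * t ^ 2 / 8) := by
  rcases isEmpty_or_nonempty ι with _ | _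
  · simp only [Fintype.card_eq_zero, Nat.cast_zero, div_zero]
    positivity
  let : MeasurableSpace ι := ⊤
  have hoeffding := (hasSubgaussianMGF_of_mem_Icc (μ := uniformOn Set.univ)
    (measurable_of_countable f).aemeasurable (ae_of_all _ hf)).mgf_le t
  simp only [mgf, integral_uniformOn_univ] at hoeffding
  set μ := (∑ i, f i) / Fintype.card ι
  have hsq : (((‖b - a‖₊ / 2) ^ 2 : NNReal) : ℝ) * t ^ 2 / 2 = (b - a) ^ 2 * t ^ 2 / 8 := by
    simp only [div_pow, NNReal.coe_div, NNReal.coe_pow, coe_nnnorm, norm_eq_abs, sq_abs,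
      NNReal.coe_ofNat]
    ring
  have hsum : ∑ i, exp (t * f i) = exp (t * μ) * ∑ i, exp (t * (f i - μ)) := by
    rw [Finset.mul_sum]; congr! 1 with i; rw [← exp_add]; ring_nf
  rw [hsum, exp_add, mul_div_assoc, ← hsq]
  exact mul_le_mul_of_nonneg_left hoeffding (exp_pos _).le

theorem sum_powersetCard_succ_insert_prod {ι R : Type*} [CommSemiring R] {s : Finset ι} {x : ι}
    (hx : x ∉ s) (g : ι → R) (n : ℕ) :
    ∑ t ∈ (insert x s).powersetCard (n + 1), ∏ i ∈ t, g i =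
      ∑ t ∈ s.powersetCard (n + 1), ∏ i ∈ t, g i + g x * ∑ t ∈ s.powersetCard n, ∏ i ∈ t, g i := by
  have hxt : ∀ t ∈ s.powersetCard n, x ∉ t := fun t ht hxt => hx ((mem_powersetCard.1 ht).1 hxt)
  rw [powersetCard_succ_insert hx, sum_union, sum_image, mul_sum]
  · exact congrArg _ (sum_congr rfl fun t ht => prod_insert (hxt t ht))
  · intro t ht u hu htu
    simpa [erase_insert (hxt t ht), erase_insert (hxt u hu)] using congrArg (erase · x) htu
  · refine disjoint_left.2 fun t ht ht' => ?_
    obtain ⟨u, -, rfl⟩ := mem_image.1 ht'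
    exact hx ((mem_powersetCard.1 ht).1 (mem_insert_self x u))

/-- The inductive step of Maclaurin's inequality: Bernoulli's (tangent line) inequality for
`t ↦ t ^ (m + 1)` at `a`, evaluated at the new mean `(N a + c) / (N + 1)`. -/
theorem choose_mul_pow_add_le_choose_succ_mul_pow (N m : ℕ) {a c : ℝ} (ha : 0 ≤ a) (hc : 0 ≤ c) :
    N.choose (m + 1) * a ^ (m + 1) + c * (N.choose m * a ^ m) ≤
      (N + 1).choose (m + 1) * ((N * a + c) / (N + 1)) ^ (m + 1) := by
  set b := (N * a + c) / (N + 1) with hb_def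
  have hb : (N + 1) * b = N * a + c := by rw [hb_def]; field_simp
  have hpascal : ((N + 1).choose (m + 1) : ℝ) = N.choose m + N.choose (m + 1) := by
    exact_mod_cast Nat.choose_succ_succ N m
  have habsorb : ((N : ℝ) + 1) * N.choose m = (N + 1).choose (m + 1) * (m + 1) := by
    exact_mod_cast Nat.add_one_mul_choose_eq N m
  have htangent : a ^ (m + 1) + (m + 1) * a ^ m * (b - a) ≤ b ^ (m + 1) := by
    have hb0 : 0 ≤ b := by rw [hb_def]; positivity
    have h2 : 0 ≤ 2 * a + (b - a) := by linarith
    simpa using pow_add_mul_le_add_pow ha h2 (m + 1)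
  calc N.choose (m + 1) * a ^ (m + 1) + c * (N.choose m * a ^ m)
      = (N + 1).choose (m + 1) * (a ^ (m + 1) + (m + 1) * a ^ m * (b - a)) := by
        linear_combination (-a ^ (m + 1)) * hpascal + (a ^ m * (b - a)) * habsorb
          - (N.choose m * a ^ m) * hb
    _ ≤ (N + 1).choose (m + 1) * b ^ (m + 1) := by gcongr

theorem sum_powersetCard_prod_le_choose_mul_pow {ι : Type*} (s : Finset ι) {g : ι → ℝ}
    (hg : ∀ i ∈ s, 0 ≤ g i) (k : ℕ) :
    ∑ t ∈ s.powersetCard k, ∏ i ∈ t, g i ≤ s.card.choose k * ((∑ i ∈ s, g i) / s.card) ^ k := by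
  induction s using Finset.induction_on generalizing k with
  | empty =>
    cases k with
    | zero => simp
    | succ m => simp [powersetCard_eq_empty.2 (by simp : (∅ : Finset ι).card < m + 1)]
  | insert x s hx ih =>
    have hgs : ∀ i ∈ s, 0 ≤ g i := fun i hi => hg i (mem_insert_of_mem hi)
    have hgx : 0 ≤ g x := hg x (mem_insert_self x s)
    cases k with
    | zero => simp
    | succ m =>
      have hmean : (s.card : ℝ) * ((∑ i ∈ s, g i) / s.card) = ∑ i ∈ s, g i := by
        rcases s.eq_empty_or_nonempty with rfl | hs
        · simp
        · field_simp
      rw [sum_powersetCard_succ_insert_prod hx, card_insert_of_notMem hx, sum_insert hx]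
      calc _ ≤ s.card.choose (m + 1) * ((∑ i ∈ s, g i) / s.card) ^ (m + 1)
              + g x * (s.card.choose m * ((∑ i ∈ s, g i) / s.card) ^ m) := by
            gcongr
            · exact ih hgs _
            · exact ih hgs _
        _ ≤ _ := by
            have := choose_mul_pow_add_le_choose_succ_mul_pow s.card m
              (div_nonneg (sum_nonneg hgs) s.card.cast_nonneg) hgx
            rw [hmean] at this
            push_cast
            convert this using 3; ring

theorem card_filter_mean_add_le_sum {ι : Type*} [Fintype ι] {f : ι → ℝ} {a b : ℝ}
    (hf : ∀ i, f i ∈ Set.Icc a b) {ε : ℝ} (hε : 0 ≤ ε) (κ : ℕ) :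
    (#{S ∈ univ.powersetCard κ | κ * ((∑ i, f i) / Fintype.card ι + ε) ≤ ∑ i ∈ S, f i} : ℝ) ≤
      (Fintype.card ι).choose κ * exp (-(2 * ε ^ 2 * κ / (b - a) ^ 2)) := by
  set μ := (∑ i, f i) / Fintype.card ι
  set P := (univ : Finset ι).powersetCard κ
  set l := 4 * ε / (b - a) ^ 2
  have hl : 0 ≤ l := by positivity
  have hchernoff : ∀ S ∈ {S ∈ P | κ * (μ + ε) ≤ ∑ i ∈ S, f i},
      exp (l * (κ * (μ + ε))) ≤ ∏ i ∈ S, exp (l * f i) := by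
    intro S hS
    rw [← exp_sum, ← mul_sum]
    exact exp_le_exp.2 (mul_le_mul_of_nonneg_left (mem_filter.1 hS).2 hl)
  have hmarkov : #{S ∈ P | κ * (μ + ε) ≤ ∑ i ∈ S, f i} * exp (l * (κ * (μ + ε))) ≤
      ∑ S ∈ P, ∏ i ∈ S, exp (l * f i) :=
    calc _ ≤ ∑ S ∈ {S ∈ P | κ * (μ + ε) ≤ ∑ i ∈ S, f i}, ∏ i ∈ S, exp (l * f i) := by
          simpa using card_nsmul_le_sum _ _ _ hchernoff
      _ ≤ _ := sum_le_sum_of_subset_of_nonneg (filter_subset _ _)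
          fun S _ _ => prod_nonneg fun i _ => (exp_pos _).le
  have hmaclaurin : ∑ S ∈ P, ∏ i ∈ S, exp (l * f i) ≤
      (Fintype.card ι).choose κ * exp (l * μ + (b - a) ^ 2 * l ^ 2 / 8) ^ κ := by
    refine (sum_powersetCard_prod_le_choose_mul_pow univ (fun i _ => (exp_pos _).le) κ).trans ?_
    rw [card_univ]
    gcongr
    exact sum_exp_mul_div_card_le hf l
  -- `l` is the optimal Chernoff parameter; for `a = b` both sides are `0` (division by zero).
  have hexponent : κ * (l * μ + (b - a) ^ 2 * l ^ 2 / 8) - l * (κ * (μ + ε)) =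
      -(2 * ε ^ 2 * κ / (b - a) ^ 2) := by
    rcases eq_or_ne (b - a) 0 with hab | hab
    · simp [l, hab]
    · simp only [l]
      field_simp
      ring
  calc (#{S ∈ P | κ * (μ + ε) ≤ ∑ i ∈ S, f i} : ℝ)
      = #{S ∈ P | κ * (μ + ε) ≤ ∑ i ∈ S, f i} * exp (l * (κ * (μ + ε)))
        / exp (l * (κ * (μ + ε))) := (mul_div_cancel_right₀ _ (exp_pos _).ne').symm
    _ ≤ (Fintype.card ι).choose κ * exp (l * μ + (b - a) ^ 2 * l ^ 2 / 8) ^ κ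
        / exp (l * (κ * (μ + ε))) :=
          div_le_div_of_nonneg_right (hmarkov.trans hmaclaurin) (exp_pos _).le
    _ = _ := by rw [← exp_nat_mul, mul_div_assoc, ← exp_sub, hexponent]

theorem card_filter_sum_le_mean_sub {ι : Type*} [Fintype ι] {f : ι → ℝ} {a b : ℝ}
    (hf : ∀ i, f i ∈ Set.Icc a b) {ε : ℝ} (hε : 0 ≤ ε) (κ : ℕ) :
    (#{S ∈ univ.powersetCard κ | ∑ i ∈ S, f i ≤ κ * ((∑ i, f i) / Fintype.card ι - ε)} : ℝ) ≤
      (Fintype.card ι).choose κ * exp (-(2 * ε ^ 2 * κ / (b - a) ^ 2)) := by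
  have hneg := card_filter_mean_add_le_sum (f := fun i => -f i)
    (fun i => ⟨neg_le_neg (hf i).2, neg_le_neg (hf i).1⟩) hε κ
  simp only [sum_neg_distrib, neg_div, neg_sub_neg] at hneg
  convert hneg using 4
  constructor <;> intro h <;> linarith

theorem card_filter_not_abs_sub_mean_le {ι : Type*} [Fintype ι] {f : ι → ℝ} {a b : ℝ}
    (hf : ∀ i, f i ∈ Set.Icc a b) {ε : ℝ} (hε : 0 ≤ ε) (κ : ℕ) :
    (#{S ∈ univ.powersetCard κ |
        ¬ |(∑ i ∈ S, f i) / S.card - (∑ i, f i) / Fintype.card ι| ≤ ε} : ℝ) ≤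
      2 * ((Fintype.card ι).choose κ * exp (-(2 * ε ^ 2 * κ / (b - a) ^ 2))) := by
  set μ := (∑ i, f i) / Fintype.card ι
  have hsub : {S ∈ (univ : Finset ι).powersetCard κ | ¬ |(∑ i ∈ S, f i) / S.card - μ| ≤ ε} ⊆
      {S ∈ (univ : Finset ι).powersetCard κ | κ * (μ + ε) ≤ ∑ i ∈ S, f i} ∪
        {S ∈ (univ : Finset ι).powersetCard κ | ∑ i ∈ S, f i ≤ κ * (μ - ε)} := by
    intro S hS
    obtain ⟨hSP, hSbad⟩ := mem_filter.1 hS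
    rw [(mem_powersetCard.1 hSP).2] at hSbad
    simp only [mem_union, mem_filter, hSP, true_and]
    rcases Nat.eq_zero_or_pos κ with rfl | hκ
    · simpa using le_total _ _
    have hκ' : (0 : ℝ) < κ := Nat.cast_pos.2 hκ
    rcases lt_abs.1 (not_le.1 hSbad) with h | h
    · left
      linarith [(lt_div_iff₀' hκ').1 (by linarith : μ + ε < (∑ i ∈ S, f i) / κ)]
    · right
      linarith [(div_lt_iff₀' hκ').1 (by linarith : (∑ i ∈ S, f i) / κ < μ - ε)]
  calc _ ≤ (#{S ∈ (univ : Finset ι).powersetCard κ | κ * (μ + ε) ≤ ∑ i ∈ S, f i} : ℝ) +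
        #{S ∈ (univ : Finset ι).powersetCard κ | ∑ i ∈ S, f i ≤ κ * (μ - ε)} := by
        exact_mod_cast (card_le_card hsub).trans (card_union_le _ _)
    _ ≤ _ := by
        linarith [card_filter_mean_add_le_sum hf hε κ, card_filter_sum_le_mean_sub hf hε κ]

theorem card_sub_card_mul_le_card_filter_forall {α β : Type*} [Fintype β] (s : Finset α)
    (p : β → α → Prop) {δ : ℝ} (hδ : ∀ j, (#{x ∈ s | ¬ p j x} : ℝ) ≤ δ) :
    #s - Fintype.card β * δ ≤ #{x ∈ s | ∀ j, p j x} := by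
  have hbad : #{x ∈ s | ¬ ∀ j, p j x} ≤ ∑ j, #{x ∈ s | ¬ p j x} :=
    calc _ ≤ #(univ.biUnion fun j => {x ∈ s | ¬ p j x}) := by
          refine card_le_card fun x hx => ?_
          obtain ⟨hxs, j, hj⟩ := by simpa only [mem_filter, not_forall] using hx
          exact mem_biUnion.2 ⟨j, mem_univ j, mem_filter.2 ⟨hxs, hj⟩⟩
      _ ≤ _ := card_biUnion_le
  have hsum : ∑ j, (#{x ∈ s | ¬ p j x} : ℝ) ≤ Fintype.card β * δ := by
    simpa using sum_le_sum fun j (_ : j ∈ univ) => hδ j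
  have hbad' := (Nat.cast_le (α := ℝ)).2 hbad
  rw [← card_filter_add_card_filter_not (s := s) (fun x => ∀ j, p j x)]
  push_cast at hbad' ⊢
  linarith

theorem freegame_sampling_concentration_general (X Y A B : Type)
    [Fintype X] [Fintype Y] [Fintype B]
    (V : X → Y → A → B → ℝ) (hV : ∀ x y a b, V x y a b ∈ Set.Icc (0 : ℝ) 1)
    (a : X → A) (ε : ℝ) (hε : 0 < ε) (κ : ℕ) (hκ2 : κ ≤ Fintype.card X) :
    1 - 2 * Real.exp (-(ε ^ 2 * κ)) * (Fintype.card Y : ℝ) * (Fintype.card B : ℝ) ≤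
      ((((univ : Finset X).powersetCard κ).filter fun S =>
          ∀ (y : Y) (b : B),
            |(∑ x ∈ S, V x y (a x) b) / (S.card : ℝ) -
                (∑ x : X, V x y (a x) b) / (Fintype.card X : ℝ)| ≤ ε).card : ℝ) /
        (((univ : Finset X).powersetCard κ).card : ℝ) := by
  have hcard : (#((univ : Finset X).powersetCard κ) : ℝ) = (Fintype.card X).choose κ := by
    rw [card_powersetCard, card_univ]
  have hpos : (0 : ℝ) < (Fintype.card X).choose κ := Nat.cast_pos.2 (Nat.choose_pos hκ2)
  have hweaken : 2 * ((Fintype.card X).choose κ * exp (-(2 * ε ^ 2 * κ / (1 - 0) ^ 2))) ≤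
      2 * exp (-(ε ^ 2 * κ)) * (Fintype.card X).choose κ := by
    have : 0 ≤ ε ^ 2 * κ := by positivity
    rw [sub_zero, one_pow, div_one, mul_comm _ (exp _), ← mul_assoc]
    gcongr 2 * exp ?_ * _
    linarith
  have htail (p : Y × B) :=
    (card_filter_not_abs_sub_mean_le (fun x => hV x p.1 (a x) p.2) hε.le κ).trans hweaken
  have hunion := card_sub_card_mul_le_card_filter_forall _ _ htail
  simp only [Prod.forall, Fintype.card_prod, hcard] at hunion
  rw [le_div_iff₀ (hcard ▸ hpos), hcard]
  push_cast at hunion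
  linear_combination hunion

/-- **Sampling concentration for free games.**  For any strategy `a : X → A` of
Merlin₁, with probability at least `1 − 2e^{−ε²κ}·|Y|·|B|` over a uniformly
random `κ`-subset `S ⊆ X`, the empirical average of `V(x,y,a(x),b)` over `x ∈ S`
is within `ε` of its average over all of `X`, simultaneously for every `y ∈ Y`
and `b ∈ B`. -/
theorem freegame_sampling_concentration (X Y A B : Type)
    [Fintype X] [Fintype Y] [Fintype A] [Fintype B]
    [Nonempty X] [Nonempty Y] [Nonempty A] [Nonempty B]
    (V : X → Y → A → B → ℝ) (hV : ∀ x y a b, V x y a b ∈ Set.Icc (0 : ℝ) 1)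
    (a : X → A) (ε : ℝ) (hε : 0 < ε) (κ : ℕ) (hκ1 : 1 ≤ κ) (hκ2 : κ ≤ Fintype.card X) :
    1 - 2 * Real.exp (-(ε ^ 2 * κ)) * (Fintype.card Y : ℝ) * (Fintype.card B : ℝ) ≤
      ((((univ : Finset X).powersetCard κ).filter fun S =>
          ∀ (y : Y) (b : B),
            |(∑ x ∈ S, V x y (a x) b) / (S.card : ℝ) -
                (∑ x : X, V x y (a x) b) / (Fintype.card X : ℝ)| ≤ ε).card : ℝ) /
        (((univ : Finset X).powersetCard κ).card : ℝ) :=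
  freegame_sampling_concentration_general X Y A B V hV a ε hε κ hκ2
end

section
/- Let G = (X,Y,A,B,V) be a two-player free game, let ε ∈ (0,1), and let κ := ⌈ln(6|Y||B|)/ε²⌉; assume κ ≤ |X|. Then with probability at least 2/3 over a uniformly random κ-element subset S ⊆ X, there exists a function α : S → A such that for every function b_α : Y → B satisfying b_α(y) ∈ argmax_{b∈B} E_{x∈S}[V(x,y,α(x),b)] for each y ∈ Y, it holds that ω(G) − 2ε ≤ max_{a : X → A} E_{x∈X, y∈Y}[V(x,y,a(x),b_α(y))] ≤ ω(G), where x and y are independent and uniform. -/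
/-!
Fix an optimal pair of strategies `(a, b)`. For every question `y` and answer `b'`, the average
of `x ↦ V x y (a x) b'` over a uniformly random `κ`-subset `S` is within `ε` of its average over
`X`, except with probability `2 exp(-2κε²)`. This is Hoeffding's inequality for sampling without
replacement, proved by Chernoff's method: by Maclaurin's inequality for elementary symmetric
polynomials, the moment generating function of a sum over a random `κ`-subset is at most that of
`κ` independent uniform samples. A union bound over the `|Y||B|` pairs `(y, b')` and the choice of
`κ` leave a failure probability of at most `1/3`. On a good sample `S`, every empirical best
response `bα` to `α := a` is, column by column, within `2ε` of the best response over `X`, so `a`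
itself already earns `ω(G) - 2ε` against `bα`.
-/

open Finset
open scoped Classical

/-- The value of Merlin₁'s best response to a fixed strategy `bα : Y → B` of
Merlin₂ in the full game. -/
noncomputable def bestRespVal {X Y A B : Type} [Fintype X] [Fintype Y]
    (V : X → Y → A → B → ℝ) (bα : Y → B) : ℝ :=
  ⨆ a : X → A,
    (∑ x : X, ∑ y : Y, V x y (a x) (bα y)) /
      ((Fintype.card X : ℝ) * (Fintype.card Y : ℝ))

section ElementarySymmetric

variable {ι R : Type*} {s : Finset ι} {u : ι → R}

/-- The elementary symmetric polynomial `e_k` evaluated at `(u i)_{i ∈ s}`. -/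
def esymm [CommSemiring R] (s : Finset ι) (u : ι → R) (k : ℕ) : R :=
  ∑ t ∈ s.powersetCard k, ∏ i ∈ t, u i

@[simp]
theorem esymm_zero [CommSemiring R] (s : Finset ι) (u : ι → R) : esymm s u 0 = 1 := by
  simp [esymm]

theorem esymm_nonneg [CommSemiring R] [PartialOrder R] [IsOrderedRing R] (hu : ∀ i ∈ s, 0 ≤ u i)
    (k : ℕ) : 0 ≤ esymm s u k :=
  sum_nonneg fun _ ht => prod_nonneg fun _ hi => hu _ ((mem_powersetCard.1 ht).1 hi)

variable [DecidableEq ι]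

section CommSemiring

variable [CommSemiring R]

theorem esymm_insert_succ {a : ι} (ha : a ∉ s) (k : ℕ) :
    esymm (insert a s) u (k + 1) = esymm s u (k + 1) + u a * esymm s u k := by
  have hinj : Set.InjOn (insert a) (s.powersetCard k : Set (Finset ι)) := fun t ht t' ht' h => by
    have hat : a ∉ t := fun h' => ha ((mem_powersetCard.1 ht).1 h')
    have hat' : a ∉ t' := fun h' => ha ((mem_powersetCard.1 ht').1 h')
    rw [← erase_insert hat, ← erase_insert hat', h]
  have hdisj : Disjoint (s.powersetCard (k + 1)) ((s.powersetCard k).image (insert a)) := by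
    refine disjoint_left.2 fun t ht ht' => ?_
    obtain ⟨t', -, rfl⟩ := mem_image.1 ht'
    exact ha ((mem_powersetCard.1 ht).1 (mem_insert_self a t'))
  rw [esymm, powersetCard_succ_insert ha, sum_union hdisj, sum_image hinj, esymm, esymm, mul_sum]
  refine congrArg _ (sum_congr rfl fun t ht => prod_insert fun h => ha ?_)
  exact (mem_powersetCard.1 ht).1 h

theorem esymm_succ_of_mem {i : ι} (hi : i ∈ s) (k : ℕ) :
    esymm s u (k + 1) = esymm (s.erase i) u (k + 1) + u i * esymm (s.erase i) u k := by
  conv_lhs => rw [← insert_erase hi]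
  exact esymm_insert_succ (notMem_erase i s) k

theorem sum_mul_esymm_erase (s : Finset ι) (u : ι → R) (k : ℕ) :
    ∑ i ∈ s, u i * esymm (s.erase i) u k = (k + 1) * esymm s u (k + 1) := by
  induction s using Finset.induction_on generalizing k with
  | empty => simp [esymm, powersetCard_eq_empty.2 (by simp : #(∅ : Finset ι) < k + 1)]
  | insert a s ha ih =>
    have herase : ∀ i ∈ s, (insert a s).erase i = insert a (s.erase i) := fun i hi =>
      erase_insert_of_ne fun h => ha (h ▸ hi)
    rw [sum_insert ha, erase_insert ha, sum_congr rfl fun i hi => by rw [herase i hi],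
      esymm_insert_succ ha]
    cases k with
    | zero =>
      have h1 := ih 0
      simp only [esymm_zero, mul_one, Nat.cast_zero, zero_add, one_mul] at h1 ⊢
      rw [h1, add_comm]
    | succ k =>
      have hins : ∀ i ∈ s, u i * esymm (insert a (s.erase i)) u (k + 1) =
          u i * esymm (s.erase i) u (k + 1) + u a * (u i * esymm (s.erase i) u k) := fun i hi => by
        rw [esymm_insert_succ fun h => ha (mem_of_mem_erase h)]
        ring
      rw [sum_congr rfl hins, sum_add_distrib, ← mul_sum, ih, ih]
      push_cast
      ring

theorem esymm_one (s : Finset ι) (u : ι → R) : esymm s u 1 = ∑ i ∈ s, u i := by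
  simpa using (sum_mul_esymm_erase s u 0).symm

end CommSemiring

theorem mul_esymm_erase_sub_mul_esymm_erase [CommRing R] {i j : ι} (hi : i ∈ s) (hj : j ∈ s)
    (hij : i ≠ j) (k : ℕ) :
    u i * esymm (s.erase i) u k - u j * esymm (s.erase j) u k =
      (u i - u j) * esymm ((s.erase i).erase j) u k := by
  cases k with
  | zero => simp
  | succ k =>
    rw [esymm_succ_of_mem (mem_erase.2 ⟨hij.symm, hj⟩), esymm_succ_of_mem (mem_erase.2 ⟨hij, hi⟩),
      erase_right_comm (a := j)]
    ring

variable [Field R] [LinearOrder R] [IsStrictOrderedRing R]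

/-- Chebyshev's sum inequality applied to `u i` and `u i * e_k(s \ {i})`, which are similarly
ordered. -/
theorem card_mul_esymm_succ_le (hu : ∀ i ∈ s, 0 ≤ u i) (k : ℕ) :
    #s * ((k + 1) * esymm s u (k + 1)) ≤ (#s - k) * (∑ i ∈ s, u i) * esymm s u k := by
  cases k with
  | zero => simp [esymm_one]
  | succ k =>
    set g : ι → R := fun i => u i * esymm (s.erase i) u k
    have hmono : MonovaryOn u g s := by
      intro i hi j hj hgij
      by_contra! huij
      have hij : i ≠ j := by rintro rfl; exact hgij.false
      have := mul_esymm_erase_sub_mul_esymm_erase (u := u) hi hj hij k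
      have hE := esymm_nonneg (s := (s.erase i).erase j)
        (fun l hl => hu l (mem_of_mem_erase (mem_of_mem_erase hl))) k
      nlinarith
    have hcheb := hmono.sum_mul_sum_le_card_mul_sum
    have hsum_g : ∑ i ∈ s, g i = (k + 1) * esymm s u (k + 1) := sum_mul_esymm_erase s u k
    have hsigma : (∑ i ∈ s, u i) * esymm s u (k + 1) =
        ∑ i ∈ s, u i * esymm (s.erase i) u (k + 1) + ∑ i ∈ s, u i * g i := by
      rw [sum_mul, ← sum_add_distrib]
      refine sum_congr rfl fun i hi => ?_
      rw [esymm_succ_of_mem hi]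
      ring
    rw [sum_mul_esymm_erase] at hsigma
    rw [hsum_g] at hcheb
    push_cast at hsigma ⊢
    linear_combination -(#s : R) * hsigma + hcheb

/-- Maclaurin's inequality `e_k / C(n, k) ≤ (e_1 / n) ^ k`. -/
theorem card_pow_mul_esymm_le (hu : ∀ i ∈ s, 0 ≤ u i) (k : ℕ) :
    (#s : R) ^ k * esymm s u k ≤ ((#s).choose k) * (∑ i ∈ s, u i) ^ k := by
  have hσ : 0 ≤ ∑ i ∈ s, u i := sum_nonneg hu
  induction k with
  | zero => simp
  | succ k ih =>
    rcases lt_or_ge k #s with hk | hk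
    · have hchoose : (((#s).choose (k + 1) : ℕ) : R) * (k + 1) = (#s).choose k * (#s - k) := by
        rw [← Nat.cast_sub hk.le]
        exact_mod_cast Nat.choose_succ_right_eq #s k
      have hsub : (0 : R) ≤ #s - k := by rw [← Nat.cast_sub hk.le]; positivity
      refine le_of_mul_le_mul_left ?_ (by positivity : (0 : R) < k + 1)
      calc ((k : R) + 1) * ((#s : R) ^ (k + 1) * esymm s u (k + 1))
          = (#s : R) ^ k * (#s * ((k + 1) * esymm s u (k + 1))) := by ring
        _ ≤ (#s : R) ^ k * ((#s - k) * (∑ i ∈ s, u i) * esymm s u k) := by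
          exact mul_le_mul_of_nonneg_left (card_mul_esymm_succ_le hu k) (by positivity)
        _ = (#s - k) * (∑ i ∈ s, u i) * ((#s : R) ^ k * esymm s u k) := by ring
        _ ≤ (#s - k) * (∑ i ∈ s, u i) * ((#s).choose k * (∑ i ∈ s, u i) ^ k) := by gcongr
        _ = (k + 1) * (((#s).choose (k + 1) : ℕ) * (∑ i ∈ s, u i) ^ (k + 1)) := by
          linear_combination (-(∑ i ∈ s, u i) ^ (k + 1)) * hchoose
    · have he : esymm s u (k + 1) = 0 := by
        rw [esymm, powersetCard_eq_empty.2 (by omega), sum_empty]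
      rw [he, mul_zero]
      exact mul_nonneg (Nat.cast_nonneg _) (pow_nonneg hσ _)

end ElementarySymmetric

theorem card_filter_exists_le_sum_card_filter {β ι : Type*} [Fintype ι] (P : Finset β)
    (p : ι → β → Prop) [∀ i, DecidablePred (p i)] :
    #{S ∈ P | ∃ i, p i S} ≤ ∑ i, #{S ∈ P | p i S} := by
  refine (card_le_card fun S hS => ?_).trans card_biUnion_le
  obtain ⟨hSP, i, hi⟩ := mem_filter.1 hS
  exact mem_biUnion.2 ⟨i, mem_univ i, mem_filter.2 ⟨hSP, hi⟩⟩

theorem one_sub_le_card_filter_div_card {β : Type*} {P : Finset β} (hP : P.Nonempty)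
    {p q : β → Prop} [DecidablePred p] [DecidablePred q] {c : ℝ}
    (hc : (#{S ∈ P | p S} : ℝ) ≤ c * #P) (hpq : ∀ S ∈ P, ¬p S → q S) :
    1 - c ≤ (#{S ∈ P | q S} : ℝ) / #P := by
  have hP' : (0 : ℝ) < #P := by exact_mod_cast hP.card_pos
  have hsplit : (#{S ∈ P | p S} : ℝ) + #{S ∈ P | ¬p S} = #P := by
    exact_mod_cast card_filter_add_card_filter_not p
  have hsub : (#{S ∈ P | ¬p S} : ℝ) ≤ #{S ∈ P | q S} := by
    exact_mod_cast card_le_card (monotone_filter_right P hpq)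
  rw [le_div_iff₀ hP']
  linarith

section Sampling

open Real

variable {α : Type*} [Fintype α]

open MeasureTheory ProbabilityTheory in
/-- Hoeffding's lemma for a Bernoulli variable. -/
theorem one_sub_add_mul_exp_le_exp {p : ℝ} (hp : p ∈ Set.Icc (0 : ℝ) 1) (s : ℝ) :
    1 - p + p * exp s ≤ exp (s * p + s ^ 2 / 8) := by
  set μ : Measure ℝ := Ber((1 : ℝ), 0, ⟨p, hp⟩)
  have hsupp : ∀ᵐ ω ∂μ, ω ∈ Set.Icc (0 : ℝ) 1 := by
    rw [ae_iff]
    exact bernoulliMeasure_apply_of_notMem_of_notMem _ measurableSet_Icc.compl (by simp) (by simp)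
  have hmean : μ[id] = p := by simp [μ, integral_bernoulliMeasure]
  have hmgf := (hasSubgaussianMGF_of_mem_Icc aemeasurable_id hsupp).mgf_le s
  simp only [mgf, hmean, μ, integral_bernoulliMeasure] at hmgf
  norm_num at hmgf
  calc 1 - p + p * exp s
      = exp (s * p) * (p * exp (s * (1 - p)) + (1 - p) * exp (-(s * p))) := by
        rw [mul_add, mul_left_comm, ← exp_add, mul_left_comm, ← exp_add]
        ring_nf
        simp only [exp_zero]
        ring
    _ ≤ exp (s * p) * exp (1 / 4 * s ^ 2 / 2) := by gcongr
    _ = exp (s * p + s ^ 2 / 8) := by rw [← exp_add]; ring_nf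

theorem exp_mul_le_one_sub_add_mul_exp {v : ℝ} (hv : v ∈ Set.Icc (0 : ℝ) 1) (t : ℝ) :
    exp (t * v) ≤ 1 - v + v * exp t := by
  have := convexOn_exp.2 (Set.mem_univ 0) (Set.mem_univ t) (sub_nonneg.2 hv.2) hv.1 (by ring)
  simpa [mul_comm t v] using this

theorem sum_exp_mul_div_card_le_exp [Nonempty α] {v : α → ℝ} (hv : ∀ x, v x ∈ Set.Icc (0 : ℝ) 1)
    (t : ℝ) :
    (∑ x, exp (t * v x)) / Fintype.card α ≤
      exp (t * ((∑ x, v x) / Fintype.card α) + t ^ 2 / 8) := by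
  have hn : (0 : ℝ) < Fintype.card α := by exact_mod_cast Fintype.card_pos
  set μ := (∑ x, v x) / Fintype.card α
  have hμ : μ ∈ Set.Icc (0 : ℝ) 1 := by
    refine ⟨div_nonneg (sum_nonneg fun x _ => (hv x).1) hn.le, (div_le_one hn).2 ?_⟩
    simpa using sum_le_sum fun x (_ : x ∈ univ) => (hv x).2
  refine le_trans ?_ (one_sub_add_mul_exp_le_exp hμ t)
  rw [div_le_iff₀ hn]
  calc ∑ x, exp (t * v x) ≤ ∑ x, (1 - v x + v x * exp t) :=
        sum_le_sum fun x _ => exp_mul_le_one_sub_add_mul_exp (hv x) t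
    _ = (1 - μ + μ * exp t) * Fintype.card α := by
        simp only [μ, sum_add_distrib, sum_sub_distrib, ← sum_mul]
        field_simp
        simp

theorem card_filter_le_le_sum_exp {β : Type*} (P : Finset β) (Z : β → ℝ) (c : ℝ) {t : ℝ}
    (ht : 0 ≤ t) : (#{S ∈ P | c ≤ Z S} : ℝ) ≤ ∑ S ∈ P, exp (t * (Z S - c)) := by
  rw [card_eq_sum_ones, Nat.cast_sum, Nat.cast_one, sum_filter]
  refine sum_le_sum fun S _ => ?_
  split_ifs with h
  · exact one_le_exp (mul_nonneg ht (sub_nonneg.2 h))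
  · exact (exp_pos _).le

theorem sum_powersetCard_exp_mul_sum_le [Nonempty α] (v : α → ℝ) (t : ℝ) (κ : ℕ) :
    ∑ S ∈ univ.powersetCard κ, exp (t * ∑ x ∈ S, v x) ≤
      (Fintype.card α).choose κ * ((∑ x, exp (t * v x)) / Fintype.card α) ^ κ := by
  have hn : (0 : ℝ) < Fintype.card α := by exact_mod_cast Fintype.card_pos
  have hmac := card_pow_mul_esymm_le (s := univ) (u := fun x => exp (t * v x))
    (fun x _ => (exp_pos _).le) κ
  rw [card_univ] at hmac
  rw [div_pow, mul_div_assoc', le_div_iff₀ (pow_pos hn κ), mul_comm]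
  convert hmac using 2
  simp only [esymm, mul_sum, exp_sum]

theorem card_filter_mul_add_le_sum_le [Nonempty α] {v : α → ℝ}
    (hv : ∀ x, v x ∈ Set.Icc (0 : ℝ) 1) {ε : ℝ} (hε : 0 ≤ ε) (κ : ℕ) :
    (#{S ∈ univ.powersetCard κ | κ * ((∑ x, v x) / Fintype.card α + ε) ≤ ∑ x ∈ S, v x} : ℝ) ≤
      (Fintype.card α).choose κ * exp (-(2 * κ * ε ^ 2)) := by
  set μ := (∑ x, v x) / Fintype.card α
  -- Chernoff's bound with the optimal parameter `t = 4ε`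
  calc (#{S ∈ univ.powersetCard κ | κ * (μ + ε) ≤ ∑ x ∈ S, v x} : ℝ)
      ≤ ∑ S ∈ univ.powersetCard κ, exp (4 * ε * (∑ x ∈ S, v x - κ * (μ + ε))) :=
        card_filter_le_le_sum_exp _ _ _ (by positivity)
    _ = exp (-(4 * ε * (κ * (μ + ε)))) *
          ∑ S ∈ univ.powersetCard κ, exp (4 * ε * ∑ x ∈ S, v x) := by
        rw [mul_sum]
        refine sum_congr rfl fun S _ => ?_
        rw [← exp_add]
        ring_nf
    _ ≤ exp (-(4 * ε * (κ * (μ + ε)))) *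
          ((Fintype.card α).choose κ * exp (4 * ε * μ + (4 * ε) ^ 2 / 8) ^ κ) := by
        gcongr
        refine (sum_powersetCard_exp_mul_sum_le v _ κ).trans ?_
        gcongr
        exact sum_exp_mul_div_card_le_exp hv _
    _ = (Fintype.card α).choose κ * exp (-(2 * κ * ε ^ 2)) := by
        rw [← exp_nat_mul, mul_left_comm, ← exp_add]
        ring_nf

theorem card_filter_lt_abs_sub_le [Nonempty α] {v : α → ℝ} (hv : ∀ x, v x ∈ Set.Icc (0 : ℝ) 1)
    {ε : ℝ} (hε : 0 ≤ ε) (κ : ℕ) :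
    (#{S ∈ univ.powersetCard κ |
        ε < |(∑ x ∈ S, v x) / #S - (∑ x, v x) / Fintype.card α|} : ℝ) ≤
      2 * ((Fintype.card α).choose κ * exp (-(2 * κ * ε ^ 2))) := by
  have hn : (0 : ℝ) < Fintype.card α := by exact_mod_cast Fintype.card_pos
  have hw : ∀ x, 1 - v x ∈ Set.Icc (0 : ℝ) 1 := fun x =>
    ⟨sub_nonneg.2 (hv x).2, sub_le_self _ (hv x).1⟩
  set U := {S ∈ (univ : Finset α).powersetCard κ |
    κ * ((∑ x, v x) / Fintype.card α + ε) ≤ ∑ x ∈ S, v x}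
  set L := {S ∈ (univ : Finset α).powersetCard κ |
    κ * ((∑ x, (1 - v x)) / Fintype.card α + ε) ≤ ∑ x ∈ S, (1 - v x)}
  have hsub : {S ∈ (univ : Finset α).powersetCard κ |
      ε < |(∑ x ∈ S, v x) / #S - (∑ x, v x) / Fintype.card α|} ⊆ U ∪ L := by
    intro S hS
    obtain ⟨hSκ, hdev⟩ := mem_filter.1 hS
    have hcard : (#S : ℝ) = κ := by exact_mod_cast (mem_powersetCard.1 hSκ).2
    have hsum : ∑ x ∈ S, v x = κ * ((∑ x ∈ S, v x) / #S) := by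
      rw [← hcard, ← expect_eq_sum_div_card, card_mul_expect]
    have hκ : (0 : ℝ) ≤ κ := κ.cast_nonneg
    rcases lt_abs.1 hdev with h | h
    · refine mem_union_left _ (mem_filter.2 ⟨hSκ, ?_⟩)
      rw [hsum]
      nlinarith
    · refine mem_union_right _ (mem_filter.2 ⟨hSκ, ?_⟩)
      have hS1 : ∑ x ∈ S, (1 - v x) = κ - ∑ x ∈ S, v x := by simp [sum_sub_distrib, hcard]
      have h1 : (∑ x, (1 - v x)) / Fintype.card α = 1 - (∑ x, v x) / Fintype.card α := by
        rw [sum_sub_distrib, sub_div]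
        simp [hn.ne']
      rw [hS1, h1, hsum]
      nlinarith
  calc _ ≤ (#(U ∪ L) : ℝ) := by exact_mod_cast card_le_card hsub
    _ ≤ #U + #L := by exact_mod_cast card_union_le U L
    _ ≤ _ := by
        rw [two_mul]
        exact add_le_add (card_filter_mul_add_le_sum_le hv hε κ)
          (card_filter_mul_add_le_sum_le hw hε κ)

theorem card_filter_exists_lt_abs_sub_le {ι : Type*} [Fintype ι] [Nonempty α] {v : ι → α → ℝ}
    (hv : ∀ i x, v i x ∈ Set.Icc (0 : ℝ) 1) {ε : ℝ} (hε : 0 ≤ ε) (κ : ℕ) :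
    (#{S ∈ univ.powersetCard κ |
        ∃ i, ε < |(∑ x ∈ S, v i x) / #S - (∑ x, v i x) / Fintype.card α|} : ℝ) ≤
      Fintype.card ι * (2 * ((Fintype.card α).choose κ * exp (-(2 * κ * ε ^ 2)))) := by
  refine (Nat.cast_le.2 (card_filter_exists_le_sum_card_filter _ _)).trans ?_
  push_cast
  simpa using sum_le_sum fun i (_ : i ∈ univ) => card_filter_lt_abs_sub_le (hv i) hε κ

theorem card_filter_exists_lt_abs_sub_le_div_three {ι : Type*} [Fintype ι] [Nonempty ι]
    [Nonempty α] {v : ι → α → ℝ} (hv : ∀ i x, v i x ∈ Set.Icc (0 : ℝ) 1) {ε : ℝ} (hε : 0 < ε)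
    {κ : ℕ} (hκ : log (6 * Fintype.card ι) / ε ^ 2 ≤ κ) :
    (#{S ∈ univ.powersetCard κ |
        ∃ i, ε < |(∑ x ∈ S, v i x) / #S - (∑ x, v i x) / Fintype.card α|} : ℝ) ≤
      (Fintype.card α).choose κ / 3 := by
  have hm : (0 : ℝ) < 6 * Fintype.card ι := by positivity
  have hexp : exp (-(2 * κ * ε ^ 2)) ≤ (6 * Fintype.card ι : ℝ)⁻¹ := by
    rw [div_le_iff₀ (by positivity)] at hκ
    rw [← exp_log hm, ← exp_neg]
    gcongr
    nlinarith
  refine (card_filter_exists_lt_abs_sub_le hv hε.le κ).trans ?_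
  calc (Fintype.card ι : ℝ) * (2 * ((Fintype.card α).choose κ * exp (-(2 * κ * ε ^ 2))))
      ≤ Fintype.card ι * (2 * ((Fintype.card α).choose κ * (6 * Fintype.card ι : ℝ)⁻¹)) := by
        gcongr
    _ = (Fintype.card α).choose κ / 3 := by
        field_simp
        ring

end Sampling

section FreeGame

variable {X Y A B : Type} [Fintype X] [Fintype Y] (V : X → Y → A → B → ℝ)

noncomputable def payoff (a : X → A) (b : Y → B) : ℝ :=
  (∑ x : X, ∑ y : Y, V x y (a x) (b y)) / ((Fintype.card X : ℝ) * (Fintype.card Y : ℝ))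

theorem payoff_le_bestRespVal [Finite A] (a : X → A) (b : Y → B) :
    payoff V a b ≤ bestRespVal V b :=
  le_ciSup (Finite.bddAbove_range fun a => payoff V a b) a

theorem bestRespVal_le_gameVal [Finite A] [Finite B] (b : Y → B) : bestRespVal V b ≤ gameVal V :=
  ciSup_mono (Finite.bddAbove_range _) fun a => le_ciSup (Finite.bddAbove_range (payoff V a)) b

theorem exists_payoff_eq_gameVal [Finite A] [Finite B] [Nonempty A] [Nonempty B] :
    ∃ a b, payoff V a b = gameVal V := by
  obtain ⟨⟨a, b⟩, hmax⟩ := Finite.exists_max fun p : (X → A) × (Y → B) => payoff V p.1 p.2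
  refine ⟨a, b, le_antisymm ?_ ?_⟩
  · exact (payoff_le_bestRespVal V a b).trans (bestRespVal_le_gameVal V b)
  · exact ciSup_le fun a' => ciSup_le fun b' => hmax (a', b')

theorem payoff_eq_sum_div (a : X → A) (b : Y → B) :
    payoff V a b = (∑ y, (∑ x, V x y (a x) (b y)) / Fintype.card X) / Fintype.card Y := by
  rw [payoff, sum_comm, ← sum_div, div_div]

theorem payoff_le_payoff_add_of_forall_abs_sub_le [Nonempty Y] {S : Finset X} {a : X → A}
    {bα : Y → B} {ε : ℝ}
    (hS : ∀ y b, |(∑ x ∈ S, V x y (a x) b) / #S - (∑ x, V x y (a x) b) / Fintype.card X| ≤ ε)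
    (hbα : ∀ y b', (∑ x ∈ S, V x y (a x) b') / #S ≤ (∑ x ∈ S, V x y (a x) (bα y)) / #S)
    (b : Y → B) : payoff V a b ≤ payoff V a bα + 2 * ε := by
  have hY : (0 : ℝ) < Fintype.card Y := by exact_mod_cast Fintype.card_pos
  have hy : ∀ y, (∑ x, V x y (a x) (b y)) / Fintype.card X ≤
      (∑ x, V x y (a x) (bα y)) / Fintype.card X + 2 * ε := fun y => by
    linarith [abs_le.1 (hS y (b y)), abs_le.1 (hS y (bα y)), hbα y (b y)]
  have hsum := sum_le_sum fun y (_ : y ∈ univ) => hy y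
  rw [sum_add_distrib, sum_const, card_univ, nsmul_eq_mul] at hsum
  rw [payoff_eq_sum_div, payoff_eq_sum_div, div_add' _ _ _ hY.ne', div_le_div_iff_of_pos_right hY]
  linarith

theorem bestRespVal_mem_Icc_of_forall_abs_sub_le [Finite A] [Finite B] [Nonempty Y]
    {a : X → A} {b : Y → B} (hab : payoff V a b = gameVal V) {S : Finset X} {bα : Y → B} {ε : ℝ}
    (hS : ∀ y b, |(∑ x ∈ S, V x y (a x) b) / #S - (∑ x, V x y (a x) b) / Fintype.card X| ≤ ε)
    (hbα : ∀ y b', (∑ x ∈ S, V x y (a x) b') / #S ≤ (∑ x ∈ S, V x y (a x) (bα y)) / #S) :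
    bestRespVal V bα ∈ Set.Icc (gameVal V - 2 * ε) (gameVal V) := by
  refine ⟨?_, bestRespVal_le_gameVal V bα⟩
  linarith [payoff_le_payoff_add_of_forall_abs_sub_le V hS hbα b, payoff_le_bestRespVal V a bα]

end FreeGame

/-- **Correctness of the free-game approximation algorithm.**  With
`κ = ⌈ln(6|Y||B|)/ε²⌉ ≤ |X|`, with probability at least `2/3` over a uniformly
random `κ`-subset `S ⊆ X` there is a strategy `α` on `S` such that *every*
pointwise-optimal response `bα : Y → B` to `α` (with respect to the empirical
average over `S`) induces a best-response value within `[ω(G) − 2ε, ω(G)]`. -/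
theorem freegame_algorithm_correctness (X Y A B : Type)
    [Fintype X] [Fintype Y] [Fintype A] [Fintype B]
    [Nonempty X] [Nonempty Y] [Nonempty A] [Nonempty B]
    (V : X → Y → A → B → ℝ) (hV : ∀ x y a b, V x y a b ∈ Set.Icc (0 : ℝ) 1)
    (ε : ℝ) (hε : ε ∈ Set.Ioo (0 : ℝ) 1) (κ : ℕ)
    (hκ : κ = ⌈Real.log (6 * (Fintype.card Y : ℝ) * (Fintype.card B : ℝ)) / ε ^ 2⌉₊)
    (hκX : κ ≤ Fintype.card X) :
    (2 : ℝ) / 3 ≤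
      ((((univ : Finset X).powersetCard κ).filter fun S =>
          ∃ α : X → A, ∀ bα : Y → B,
            (∀ (y : Y) (b' : B),
                (∑ x ∈ S, V x y (α x) b') / (S.card : ℝ) ≤
                  (∑ x ∈ S, V x y (α x) (bα y)) / (S.card : ℝ)) →
            bestRespVal V bα ∈ Set.Icc (gameVal V - 2 * ε) (gameVal V)).card : ℝ) /
        (((univ : Finset X).powersetCard κ).card : ℝ) := by
  obtain ⟨a, b, hab⟩ := exists_payoff_eq_gameVal V
  have hsamples : Real.log (6 * Fintype.card (Y × B)) / ε ^ 2 ≤ κ := by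
    rw [hκ, Fintype.card_prod, Nat.cast_mul, ← mul_assoc]
    exact Nat.le_ceil _
  have hbad := card_filter_exists_lt_abs_sub_le_div_three
    (v := fun (p : Y × B) x => V x p.1 (a x) p.2) (fun _ _ => hV _ _ _ _) hε.1 hsamples
  calc (2 : ℝ) / 3 = 1 - 1 / 3 := by norm_num
    _ ≤ _ := by
      refine one_sub_le_card_filter_div_card (powersetCard_nonempty.2 (by simpa using hκX))
        (hbad.trans_eq ?_) fun S _ hS => ⟨a, fun bα hbα => bestRespVal_mem_Icc_of_forall_abs_sub_le
          V hab (fun y b' => not_lt.1 fun h => hS ⟨(y, b'), h⟩) hbα⟩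
      rw [card_powersetCard, card_univ]
      ring
end

section
/- Let G = (Y_1,…,Y_ℓ,B_1,…,B_ℓ,V) be an ℓ-player free game with ℓ ≥ 2, and let (b*_1,…,b*_ℓ) be a tuple of strategies b*_i : Y_i → B_i achieving the value ω(G). Let δ > 0 and let S ⊆ Y_ℓ be a nonempty subset that is good with respect to b*_ℓ and δ, meaning: for every (y_1,…,y_{ℓ−1}) ∈ Y_1×⋯×Y_{ℓ−1} and every (b_1,…,b_{ℓ−1}) ∈ B_1×⋯×B_{ℓ−1}, |E_{y∈S}[V(y_1,…,y_{ℓ−1},y,b_1,…,b_{ℓ−1},b*_ℓ(y))] − E_{y∈Y_ℓ}[V(y_1,…,y_{ℓ−1},y,b_1,…,b_{ℓ−1},b*_ℓ(y))]| ≤ δ/2. Define the (ℓ−1)-player free game G_P with question sets Y_1,…,Y_{ℓ−1}, answer sets B_1,…,B_{ℓ−1}, and verification function V_P(y_1,…,y_{ℓ−1},b_1,…,b_{ℓ−1}) := E_{y∈S}[V(y_1,…,y_{ℓ−1},y,b_1,…,b_{ℓ−1},b*_ℓ(y))]. Then: (i) ω(G_P) ≥ ω(G) − δ/2; and (ii)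 for any strategies b_i : Y_i → B_i (i ∈ [ℓ−1]) achieving value W in G_P, the ℓ-tuple (b_1,…,b_{ℓ−1},b*_ℓ) achieves value at least W − δ/2 in G. -/
open Finset
open scoped Classical

/-- The value achieved in the `(l+1)`-player free game `(Y, B, V)` by the tuple
of deterministic strategies `b i : Y i → B i`. -/
noncomputable def stratVal {l : ℕ} {Y B : Fin (l + 1) → Type}
    [∀ i, Fintype (Y i)]
    (V : (∀ i, Y i) → (∀ i, B i) → ℝ) (b : ∀ i, Y i → B i) : ℝ :=
  (∑ y : ∀ i, Y i, V y (fun i => b i (y i))) / (Fintype.card (∀ i, Y i) : ℝ)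

/-- The value `ω(G)` of the `(l+1)`-player free game `(Y, B, V)`. -/
noncomputable def fullGameVal {l : ℕ} {Y B : Fin (l + 1) → Type}
    [∀ i, Fintype (Y i)]
    (V : (∀ i, Y i) → (∀ i, B i) → ℝ) : ℝ :=
  ⨆ b : ∀ i, Y i → B i, stratVal V b

/-- The verification function `V_P` of the peeled `(ℓ−1)`-player game `G_P`,
obtained by restricting the last player's question to the subset `S` and fixing
his strategy to `bℓ`. -/
noncomputable def peeledV {l : ℕ} {Y B : Fin (l + 1) → Type}
    (V : (∀ i, Y i) → (∀ i, B i) → ℝ)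
    (S : Finset (Y (Fin.last l))) (bℓ : Y (Fin.last l) → B (Fin.last l))
    (y' : ∀ i : Fin l, Y i.castSucc) (b' : ∀ i : Fin l, B i.castSucc) : ℝ :=
  (∑ y ∈ S, V (Fin.snoc y' y) (Fin.snoc b' (bℓ y))) / (S.card : ℝ)

/-- The value achieved in the peeled game `G_P` by the tuple of strategies
`c i : Y i → B i` (for the first `ℓ−1` players). -/
noncomputable def peeledStratVal {l : ℕ} {Y B : Fin (l + 1) → Type}
    [∀ i, Fintype (Y i)]
    (V : (∀ i, Y i) → (∀ i, B i) → ℝ)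
    (S : Finset (Y (Fin.last l))) (bℓ : Y (Fin.last l) → B (Fin.last l))
    (c : ∀ i : Fin l, Y i.castSucc → B i.castSucc) : ℝ :=
  (∑ y' : ∀ i : Fin l, Y i.castSucc, peeledV V S bℓ y' (fun i => c i (y' i))) /
    (Fintype.card (∀ i : Fin l, Y i.castSucc) : ℝ)

/-- The value `ω(G_P)` of the peeled `(ℓ−1)`-player game. -/
noncomputable def peeledGameVal {l : ℕ} {Y B : Fin (l + 1) → Type}
    [∀ i, Fintype (Y i)]
    (V : (∀ i, Y i) → (∀ i, B i) → ℝ)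
    (S : Finset (Y (Fin.last l))) (bℓ : Y (Fin.last l) → B (Fin.last l)) : ℝ :=
  ⨆ c : ∀ i : Fin l, Y i.castSucc → B i.castSucc, peeledStratVal V S bℓ c

lemma stratVal_snoc {l : ℕ} {Y B : Fin (l + 1) → Type}
    [∀ i, Fintype (Y i)]
    (V : (∀ i, Y i) → (∀ i, B i) → ℝ)
    (bℓ : Y (Fin.last l) → B (Fin.last l))
    (c : ∀ i : Fin l, Y i.castSucc → B i.castSucc) :
    stratVal V (Fin.snoc c bℓ) =
      (∑ y' : ∀ i : Fin l, Y i.castSucc,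
        (∑ y : Y (Fin.last l), V (Fin.snoc y' y) (Fin.snoc (fun i => c i (y' i)) (bℓ y))) /
          (Fintype.card (Y (Fin.last l)) : ℝ)) /
        (Fintype.card (∀ i : Fin l, Y i.castSucc) : ℝ) := by
  have hcard : (Fintype.card (∀ i, Y i) : ℝ) =
      (Fintype.card (Y (Fin.last l)) : ℝ) * (Fintype.card (∀ i : Fin l, Y i.castSucc) : ℝ) := by
    rw [← Nat.cast_mul, ← Fintype.card_prod]
    exact_mod_cast (Fintype.card_congr (Fin.snocEquiv Y).symm)
  have hsum : (∑ y : ∀ i, Y i, V y (fun i => (Fin.snoc c bℓ : ∀ i, Y i → B i) i (y i))) =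
      ∑ p : Y (Fin.last l) × (∀ i : Fin l, Y i.castSucc),
        V (Fin.snoc p.2 p.1) (Fin.snoc (fun i => c i (p.2 i)) (bℓ p.1)) := by
    rw [← Equiv.sum_comp (Fin.snocEquiv Y)]
    refine Finset.sum_congr rfl fun p _ => ?_
    congr 1
    funext i
    refine Fin.lastCases ?_ (fun j => ?_) i <;> simp [Fin.snocEquiv]
  rw [stratVal, hsum, hcard, Fintype.sum_prod_type]
  rw [Finset.sum_comm, Finset.sum_div, Finset.sum_div]
  refine Finset.sum_congr rfl fun y' _ => ?_
  rw [div_div]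

/-- **Peeling off the last player.**  Here the number of players is `ℓ = l + 1`
with `l ≥ 1` (so `ℓ ≥ 2`).  Let `b*` be an optimal tuple of strategies for the
full game, and let `S` be a nonempty subset of the last player's questions which
is *good* with respect to `b*_ℓ` and `δ` (the empirical average over `S` is
within `δ/2` of the true average, for all questions/answers of the other
players).  Then (i) `ω(G_P) ≥ ω(G) − δ/2`, and (ii) any tuple of strategies
achieving value `W` in `G_P`, extended by `b*_ℓ`, achieves value at least
`W − δ/2` in `G`. -/
theorem peeling_lemma (l : ℕ) (hl : 1 ≤ l) (Y B : Fin (l + 1) → Type)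
    [∀ i, Fintype (Y i)] [∀ i, Nonempty (Y i)]
    [∀ i, Fintype (B i)] [∀ i, Nonempty (B i)]
    (V : (∀ i, Y i) → (∀ i, B i) → ℝ)
    (hV : ∀ y b, V y b ∈ Set.Icc (0 : ℝ) 1)
    (bstar : ∀ i, Y i → B i)
    (hopt : stratVal V bstar = fullGameVal V)
    (δ : ℝ) (hδ : 0 < δ)
    (S : Finset (Y (Fin.last l))) (hS : S.Nonempty)
    (hgood : ∀ (y' : ∀ i : Fin l, Y i.castSucc) (b' : ∀ i : Fin l, B i.castSucc),
      |(∑ y ∈ S, V (Fin.snoc y' y) (Fin.snoc b' (bstar (Fin.last l) y))) / (S.card : ℝ) -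
          (∑ y : Y (Fin.last l), V (Fin.snoc y' y) (Fin.snoc b' (bstar (Fin.last l) y))) /
            (Fintype.card (Y (Fin.last l)) : ℝ)| ≤ δ / 2) :
    fullGameVal V - δ / 2 ≤ peeledGameVal V S (bstar (Fin.last l)) ∧
      ∀ c : ∀ i : Fin l, Y i.castSucc → B i.castSucc,
        peeledStratVal V S (bstar (Fin.last l)) c - δ / 2 ≤
          stratVal V (Fin.snoc c (bstar (Fin.last l))) := by
  set bℓ := bstar (Fin.last l)
  have hN : (0 : ℝ) < (Fintype.card (∀ i : Fin l, Y i.castSucc) : ℝ) := by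
    exact_mod_cast Fintype.card_pos
  have key : ∀ c : ∀ i : Fin l, Y i.castSucc → B i.castSucc,
      |peeledStratVal V S bℓ c - stratVal V (Fin.snoc c bℓ)| ≤ δ / 2 := by
    intro c
    rw [stratVal_snoc, peeledStratVal, div_sub_div_same, ← Finset.sum_sub_distrib,
      abs_div, abs_of_pos hN]
    rw [div_le_iff₀ hN]
    calc |∑ y' : ∀ i : Fin l, Y i.castSucc, (peeledV V S bℓ y' (fun i => c i (y' i)) -
            (∑ y : Y (Fin.last l), V (Fin.snoc y' y) (Fin.snoc (fun i => c i (y' i)) (bℓ y))) /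
              (Fintype.card (Y (Fin.last l)) : ℝ))|
        ≤ ∑ y' : ∀ i : Fin l, Y i.castSucc, |peeledV V S bℓ y' (fun i => c i (y' i)) -
            (∑ y : Y (Fin.last l), V (Fin.snoc y' y) (Fin.snoc (fun i => c i (y' i)) (bℓ y))) /
              (Fintype.card (Y (Fin.last l)) : ℝ)| := Finset.abs_sum_le_sum_abs _ _
      _ ≤ ∑ _y' : ∀ i : Fin l, Y i.castSucc, δ / 2 :=
          Finset.sum_le_sum fun y' _ => hgood y' _
      _ = δ / 2 * (Fintype.card (∀ i : Fin l, Y i.castSucc) : ℝ) := by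
          rw [Finset.sum_const, Finset.card_univ, nsmul_eq_mul, mul_comm]
  refine ⟨?_, fun c => by linarith [abs_le.1 (key c) |>.2]⟩
  -- part (i)
  have hb : (Fin.snoc (fun i : Fin l => bstar i.castSucc) bℓ : ∀ i, Y i → B i) = bstar := by
    funext i
    refine Fin.lastCases ?_ (fun j => ?_) i <;> simp [bℓ]
  have h1 : fullGameVal V ≤ peeledStratVal V S bℓ (fun i => bstar i.castSucc) + δ / 2 := by
    have := abs_le.1 (key (fun i => bstar i.castSucc)) |>.1
    rw [hb] at this
    rw [← hopt]
    linarith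
  have h2 : peeledStratVal V S bℓ (fun i => bstar i.castSucc) ≤ peeledGameVal V S bℓ :=
    le_ciSup (Set.Finite.bddAbove (Set.finite_range _)) _
  linarith
end
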